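/- arXiv:1403.6622 — 9 statements merged into one kernel-verified Lean document; each statement's English description precedes it below -/
import Mathlib

section
/- Let f : ℝⁿ → ℝ be convex with block-coordinatewise Lipschitz continuous gradient, and let z ∈ ℝⁿ, z ≠ 0, with ∇f(z) ≠ 0. Then z is a local minimizer of F(x) = f(x) + ‖x‖_{0,λ} on the open ball B_∞(z, r), where r = min{ \underline{z}, \underline{λ}/‖∇f(z)‖₁ }, if and only if z is a global minimizer of the convex problem min_{x ∈ S_{I(z)}} f(x), i.e. if and only if ∇_{(j)} f(z) = 0 for every j ∈ I(z). -/
open scoped RealInnerProductSpace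
open Finset

/-- The weighted ℓ₀ quasinorm `‖x‖_{0,λ} = ∑ᵢ λᵢ ‖xᵢ‖₀`, where the blocks are
given by the assignment `blk : Fin n → Fin N` of coordinates to blocks. -/
noncomputable def l0norm {n N : ℕ} (blk : Fin n → Fin N) (lam : Fin N → ℝ)
    (x : EuclideanSpace ℝ (Fin n)) : ℝ :=
  ∑ j, if x j ≠ 0 then lam (blk j) else 0

/-- The index set `I(x) = supp(x) ∪ {j : j ∈ 𝒮ᵢ, λᵢ = 0}`, as a predicate. -/
def InIset {n N : ℕ} (blk : Fin n → Fin N) (lam : Fin N → ℝ)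
    (x : EuclideanSpace ℝ (Fin n)) (j : Fin n) : Prop :=
  x j ≠ 0 ∨ lam (blk j) = 0

/-- The block restriction `xᵢ = Uᵢᵀ x`, viewed as the vector of coordinates in block `i`. -/
noncomputable def blkProj {n N : ℕ} (blk : Fin n → Fin N) (i : Fin N)
    (x : EuclideanSpace ℝ (Fin n)) : EuclideanSpace ℝ {j : Fin n // blk j = i} :=
  WithLp.toLp 2 (fun j => x j.1)

/-- The block embedding `Uᵢ hᵢ` of a block vector into `ℝⁿ`. -/
noncomputable def blkEmbed {n N : ℕ} (blk : Fin n → Fin N) (i : Fin N)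
    (v : EuclideanSpace ℝ {j : Fin n // blk j = i}) : EuclideanSpace ℝ (Fin n) :=
  WithLp.toLp 2 (fun j => if h : blk j = i then v ⟨j, h⟩ else 0)

/-!
On the `ℓ∞`-ball of radius `r` around `z` the coordinates in `supp z` stay nonzero
(`r ≤ \underline z`), so the penalty `‖·‖_{0,λ}` can only grow, and it grows by at least
`\underline λ` for every coordinate outside `I(z)` that becomes nonzero. If `∇_{(j)} f(z) = 0` on
`I(z)`, the gradient inequality of the convex `f` loses at most `|∇_{(j)} f(z)| r ≤ ‖∇f(z)‖₁ r ≤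
\underline λ` on each such coordinate, which the penalty pays for. Conversely, for `j ∈ I(z)` the
penalty is constant along `t ↦ z + t eⱼ` for `|t| < r`, so `t ↦ f (z + t eⱼ)` has a local minimum
at `0` and Fermat's rule gives `∇_{(j)} f(z) = 0`.
-/

section Gradient

variable {E : Type*} [NormedAddCommGroup E] [InnerProductSpace ℝ E] [CompleteSpace E]
  {f : E → ℝ} {G x : E}

theorem HasGradientAt.hasDerivAt_add_smul (hf : HasGradientAt f G x) (v : E) :
    HasDerivAt (fun t : ℝ => f (x + t • v)) ⟪G, v⟫ 0 := by
  have hline : HasDerivAt (fun t : ℝ => x + t • v) v 0 := by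
    simpa using ((hasDerivAt_id (0 : ℝ)).smul_const v).const_add x
  have hf' : HasFDerivAt f (InnerProductSpace.toDual ℝ E G) (x + (0 : ℝ) • v) := by
    simpa using hf.hasFDerivAt
  simpa [Function.comp_def] using hf'.comp_hasDerivAt (0 : ℝ) hline

theorem ConvexOn.add_inner_le_of_hasGradientAt (hconv : ConvexOn ℝ Set.univ f)
    (hf : HasGradientAt f G x) (y : E) : f x + ⟪G, y - x⟫ ≤ f y := by
  have hline : ConvexOn ℝ Set.univ (fun t : ℝ => f (x + t • (y - x))) := by
    refine (hconv.comp_affineMap (AffineMap.lineMap x y)).congr fun t _ => ?_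
    simp [AffineMap.lineMap_apply_module', add_comm]
  have := hline.le_slope_of_hasDerivAt (Set.mem_univ 0) (Set.mem_univ 1) zero_lt_one
    (hf.hasDerivAt_add_smul (y - x))
  simp only [slope_def_field, one_smul, add_sub_cancel, zero_smul, add_zero, sub_zero,
    div_one] at this
  linarith

end Gradient

section FiniteInf

variable {ι : Type*} [Finite ι] {p : ι → Prop} {a : ι → ℝ}

theorem finite_setOf_exists_and_eq : {t | ∃ i, p i ∧ t = a i}.Finite :=
  (Set.finite_range a).subset fun _ ⟨i, _, h⟩ => ⟨i, h.symm⟩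

theorem sInf_setOf_exists_le {i : ι} (hi : p i) : sInf {t | ∃ i, p i ∧ t = a i} ≤ a i :=
  csInf_le finite_setOf_exists_and_eq.bddBelow ⟨i, hi, rfl⟩

theorem sInf_setOf_exists_pos (ha : ∀ i, p i → 0 < a i) (hp : ∃ i, p i) :
    0 < sInf {t | ∃ i, p i ∧ t = a i} := by
  obtain ⟨i, hi⟩ := hp
  have hne : {t | ∃ i, p i ∧ t = a i}.Nonempty := ⟨a i, i, hi, rfl⟩
  obtain ⟨k, hk, hmin⟩ := hne.csInf_mem finite_setOf_exists_and_eq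
  exact hmin ▸ ha k hk

end FiniteInf

theorem ite_ne_zero_le_mul_sub_add_ite {a b c l r : ℝ} (hc : a ≠ 0 ∨ l = 0 → c = 0)
    (hba : |b - a| < r) (hra : a ≠ 0 → r ≤ |a|) (hcr : l ≠ 0 → |c| * r ≤ l) :
    (if a ≠ 0 then l else 0) ≤ c * (b - a) + (if b ≠ 0 then l else 0) := by
  by_cases ha : a = 0
  · subst ha
    by_cases hl : l = 0
    · simp [hc (Or.inr hl), hl]
    · rw [sub_zero] at hba
      by_cases hb : b = 0
      · simp [hb]
      have hcb : -(|c| * r) ≤ c * b := by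
        have := neg_abs_le (c * b)
        rw [abs_mul] at this
        nlinarith [abs_nonneg c]
      simp only [ne_eq, not_true_eq_false, if_false, sub_zero, hb, not_false_eq_true, if_true]
      linarith [hcr hl]
  · have hb : b ≠ 0 := by
      rintro rfl
      have := hra ha
      rw [zero_sub, abs_neg] at hba
      linarith
    simp [ha, hb, hc (Or.inl ha)]

section L0

variable {n N : ℕ} {blk : Fin n → Fin N} {lam : Fin N → ℝ} {x y z : EuclideanSpace ℝ (Fin n)}

theorem l0norm_congr (h : ∀ k, (y k ≠ 0 ↔ x k ≠ 0) ∨ lam (blk k) = 0) :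
    l0norm blk lam y = l0norm blk lam x := by
  refine sum_congr rfl fun k _ => ?_
  rcases h k with hk | hk
  · simp only [hk]
  · simp [hk]

theorem l0norm_le_inner_add_l0norm {G : EuclideanSpace ℝ (Fin n)} {r : ℝ}
    (hG : ∀ j, InIset blk lam z j → G j = 0) (hy : ∀ j, |y j - z j| < r)
    (hrz : ∀ j, z j ≠ 0 → r ≤ |z j|) (hGr : ∀ j, lam (blk j) ≠ 0 → |G j| * r ≤ lam (blk j)) :
    l0norm blk lam z ≤ ⟪G, y - z⟫ + l0norm blk lam y := by
  rw [PiLp.inner_apply, l0norm, l0norm, ← sum_add_distrib]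
  refine sum_le_sum fun j _ => ?_
  simpa [mul_comm] using
    ite_ne_zero_le_mul_sub_add_ite (hG j) (hy j) (hrz j) (hGr j)

theorem HasGradientAt.apply_eq_zero_of_minimizes_add_l0norm {G : EuclideanSpace ℝ (Fin n)}
    {f : EuclideanSpace ℝ (Fin n) → ℝ} (hf : HasGradientAt f G z) {r : ℝ} (hr : 0 < r)
    (hrz : ∀ j, z j ≠ 0 → r ≤ |z j|)
    (hmin : ∀ y : EuclideanSpace ℝ (Fin n), (∀ j, |y j - z j| < r) →
      f z + l0norm blk lam z ≤ f y + l0norm blk lam y)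
    {j : Fin n} (hj : InIset blk lam z j) : G j = 0 := by
  let e := EuclideanSpace.single j (1 : ℝ)
  have hcoord : ∀ (t : ℝ) k, (z + t • e) k = z k + if k = j then t else 0 := by
    intro t k
    simp [e]
  have hlocal : IsLocalMin (fun t : ℝ => f (z + t • e)) 0 := by
    filter_upwards [Metric.ball_mem_nhds (0 : ℝ) hr] with t ht
    rw [Metric.mem_ball, Real.dist_eq, sub_zero] at ht
    have hl0 : l0norm blk lam (z + t • e) = l0norm blk lam z := by
      refine l0norm_congr fun k => ?_
      by_cases hk : k = j
      · subst hk
        refine hj.imp (fun hz => ?_) id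
        have := hrz k hz
        have : z k + t ≠ 0 := fun h => by
          rw [show t = -z k by linarith, abs_neg] at ht
          linarith
        simpa [hcoord, hz] using this
      · simp [hcoord, hk]
    have := hmin (z + t • e) fun k => by
      rw [hcoord, add_sub_cancel_left]
      split_ifs <;> simp [ht, hr]
    simp only [zero_smul, add_zero]
    linarith
  simpa [e, EuclideanSpace.inner_single_right] using
    hlocal.hasDerivAt_eq_zero (hf.hasDerivAt_add_smul e)

end L0

theorem statement0_general {n N : ℕ} (blk : Fin n → Fin N) (lam : Fin N → ℝ)
    (hlam : ∀ i, 0 ≤ lam i) (hlam_pos : ∃ i, 0 < lam i)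
    (f : EuclideanSpace ℝ (Fin n) → ℝ)
    (g : EuclideanSpace ℝ (Fin n) → EuclideanSpace ℝ (Fin n))
    (hconv : ConvexOn ℝ Set.univ f)
    (hgrad : ∀ x, HasGradientAt f (g x) x)
    (z : EuclideanSpace ℝ (Fin n)) (hz : z ≠ 0)
    (r : ℝ)
    (hr : r = min (sInf {t : ℝ | ∃ j, z j ≠ 0 ∧ t = |z j|})
      (sInf {t : ℝ | ∃ i, 0 < lam i ∧ t = lam i} / ∑ j, |g z j|)) :
    (∀ y : EuclideanSpace ℝ (Fin n), (∀ j, |y j - z j| < r) →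
        f z + l0norm blk lam z ≤ f y + l0norm blk lam y)
      ↔ (∀ j, InIset blk lam z j → g z j = 0) := by
  have hrz : ∀ j, z j ≠ 0 → r ≤ |z j| := fun j hj =>
    hr ▸ (min_le_left _ _).trans (sInf_setOf_exists_le hj)
  constructor
  · intro hmin j hj
    by_contra hgj
    have hsupp : ∃ k, z k ≠ 0 := by
      by_contra! h
      exact hz (PiLp.ext h)
    have hr0 : 0 < r := hr ▸ lt_min (sInf_setOf_exists_pos (fun _ => abs_pos.mpr) hsupp)
      (div_pos (sInf_setOf_exists_pos (fun _ => id) hlam_pos)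
        (sum_pos' (fun k _ => abs_nonneg (g z k)) ⟨j, mem_univ j, abs_pos.mpr hgj⟩))
    exact hgj ((hgrad z).apply_eq_zero_of_minimizes_add_l0norm hr0 hrz hmin hj)
  · intro hI y hy
    have hGr : ∀ j, lam (blk j) ≠ 0 → |g z j| * r ≤ lam (blk j) := by
      intro j hj
      set m := sInf {t : ℝ | ∃ i, 0 < lam i ∧ t = lam i}
      set S := ∑ k, |g z k|
      have hm0 : 0 ≤ m := Real.sInf_nonneg fun _ ⟨i, hi, h⟩ => h ▸ hi.le
      have hgS : |g z j| ≤ S := single_le_sum (fun k _ => abs_nonneg (g z k)) (mem_univ j)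
      calc |g z j| * r ≤ |g z j| * (m / S) :=
            mul_le_mul_of_nonneg_left (hr ▸ min_le_right _ _) (abs_nonneg _)
        _ = |g z j| / S * m := (mul_comm_div _ _ _).symm
        _ ≤ m := mul_le_of_le_one_left hm0 (div_le_one_of_le₀ hgS ((abs_nonneg _).trans hgS))
        _ ≤ lam (blk j) := sInf_setOf_exists_le ((hlam _).lt_of_ne' hj)
    linarith [l0norm_le_inner_add_l0norm hI hy hrz hGr,
      hconv.add_inner_le_of_hasGradientAt (hgrad z) y]

/-- For `f` convex with block-coordinatewise Lipschitz gradient, `z ≠ 0`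
with `∇f(z) ≠ 0`, `z` is a local minimizer of `F = f + ‖·‖_{0,λ}` on the open `ℓ∞`-ball of
radius `r = min{ \underline z, \underline λ / ‖∇f(z)‖₁ }` centered at `z` if and only if
`∇_{(j)} f(z) = 0` for every `j ∈ I(z)`. -/
theorem statement0 {n N : ℕ} (blk : Fin n → Fin N) (lam : Fin N → ℝ)
    (hlam : ∀ i, 0 ≤ lam i) (hlam_pos : ∃ i, 0 < lam i)
    (f : EuclideanSpace ℝ (Fin n) → ℝ)
    (g : EuclideanSpace ℝ (Fin n) → EuclideanSpace ℝ (Fin n))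
    (hconv : ConvexOn ℝ Set.univ f)
    (hgrad : ∀ x, HasGradientAt f (g x) x)
    (L : Fin N → ℝ) (hL : ∀ i, 0 < L i)
    (hLip : ∀ (i : Fin N) (x : EuclideanSpace ℝ (Fin n))
      (h : EuclideanSpace ℝ {j : Fin n // blk j = i}),
      ‖blkProj blk i (g (x + blkEmbed blk i h)) - blkProj blk i (g x)‖ ≤ L i * ‖h‖)
    (z : EuclideanSpace ℝ (Fin n)) (hz : z ≠ 0) (hgz : g z ≠ 0)
    (r : ℝ)
    (hr : r = min (sInf {t : ℝ | ∃ j, z j ≠ 0 ∧ t = |z j|})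
      (sInf {t : ℝ | ∃ i, 0 < lam i ∧ t = lam i} / ∑ j, |g z j|)) :
    (∀ y : EuclideanSpace ℝ (Fin n), (∀ j, |y j - z j| < r) →
        f z + l0norm blk lam z ≤ f y + l0norm blk lam y)
      ↔ (∀ j, InIset blk lam z j → g z j = 0) :=
  statement0_general blk lam hlam hlam_pos f g hconv hgrad z hz r hr
end

section
/- Let f : ℝⁿ → ℝ be convex with block-coordinatewise Lipschitz continuous gradient and assume λ_i > 0 for all i ∈ [N]. If ∇f(0) ≠ 0, then 0 is a local minimizer of F(x) = f(x) + ‖x‖_{0,λ} on the open ball B_∞(0, min_{i∈[N]} λ_i / ‖∇f(0)‖₁), i.e. F(x) ≥ F(0) for all x in this ball. If ∇f(0) = 0, then 0 is a global minimizer of F on ℝⁿ. -/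
open Finset

open scoped InnerProductSpace

/-! Convexity gives `f x + ⟪∇f(x), y - x⟫ ≤ f y`, so `F(x) - F(0) ≥ ⟪∇f(0), x⟫ + ‖x‖_{0,λ}`.
A nonzero `x` pays at least `minᵢ λᵢ` in the ℓ₀ term, while on the ball the linear term is
bounded below by `-‖∇f(0)‖₁ ‖x‖_∞ > -minᵢ λᵢ`. If `∇f(0) = 0` the linear term vanishes. -/

theorem ConvexOn.inner_gradient_le_sub {E : Type*} [NormedAddCommGroup E]
    [InnerProductSpace ℝ E] [CompleteSpace E] {s : Set E} {f : E → ℝ} {g x y : E}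
    (hf : ConvexOn ℝ s f) (hx : x ∈ s) (hy : y ∈ s) (hg : HasGradientAt f g x) :
    ⟪g, y - x⟫_ℝ ≤ f y - f x := by
  set φ : ℝ → ℝ := f ∘ AffineMap.lineMap x y
  have hφ : ConvexOn ℝ (AffineMap.lineMap x y ⁻¹' s) φ := hf.comp_affineMap _
  have hφ' : HasDerivAt φ ⟪g, y - x⟫_ℝ 0 := by
    simpa using (hasGradientAt_iff_hasFDerivAt.mp hg).comp_hasDerivAt_of_eq (0 : ℝ)
      AffineMap.hasDerivAt_lineMap (AffineMap.lineMap_apply_zero x y).symm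
  simpa [slope_def_field, φ] using
    hφ.le_slope_of_hasDerivAt (by simpa using hx) (by simpa using hy) one_pos hφ'

theorem abs_inner_le_of_forall_abs_le {ι : Type*} [Fintype ι] {g x : EuclideanSpace ℝ ι}
    {r : ℝ} (hx : ∀ j, |x j| ≤ r) :
    |⟪g, x⟫_ℝ| ≤ (∑ j, |g j|) * r :=
  calc |⟪g, x⟫_ℝ| = |∑ j, g j * x j| := by
        simp [PiLp.inner_apply, mul_comm]
    _ ≤ ∑ j, |g j| * |x j| := by
        simpa only [abs_mul] using abs_sum_le_sum_abs (fun j => g j * x j) univ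
    _ ≤ ∑ j, |g j| * r := by gcongr with j; exact hx j
    _ = (∑ j, |g j|) * r := (sum_mul ..).symm

section l0norm

variable {n N : ℕ} (blk : Fin n → Fin N) {lam : Fin N → ℝ}

@[simp]
theorem l0norm_zero : l0norm blk lam 0 = 0 := by
  simp [l0norm]

theorem l0norm_nonneg (hlam : ∀ i, 0 ≤ lam i) (x : EuclideanSpace ℝ (Fin n)) :
    0 ≤ l0norm blk lam x :=
  sum_nonneg fun j _ => by split_ifs <;> simp [hlam]

theorem sInf_range_le_l0norm (hlam : ∀ i, 0 ≤ lam i) {x : EuclideanSpace ℝ (Fin n)}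
    (hx : x ≠ 0) : sInf (Set.range lam) ≤ l0norm blk lam x := by
  obtain ⟨j, hj⟩ : ∃ j, x j ≠ 0 := by
    by_contra! h
    exact hx (PiLp.ext h)
  calc sInf (Set.range lam) ≤ lam (blk j) := csInf_le (Set.finite_range lam).bddBelow ⟨_, rfl⟩
    _ = if x j ≠ 0 then lam (blk j) else 0 := (if_pos hj).symm
    _ ≤ l0norm blk lam x :=
        single_le_sum (f := fun j => if x j ≠ 0 then lam (blk j) else 0)
          (fun k _ => by split_ifs <;> simp [hlam]) (mem_univ j)

end l0norm

theorem statement1_general {n N : ℕ} (blk : Fin n → Fin N) (lam : Fin N → ℝ)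
    (hlam : ∀ i, 0 < lam i)
    (f : EuclideanSpace ℝ (Fin n) → ℝ)
    (g : EuclideanSpace ℝ (Fin n) → EuclideanSpace ℝ (Fin n))
    (hconv : ConvexOn ℝ Set.univ f)
    (hgrad : ∀ x, HasGradientAt f (g x) x) :
    (g 0 ≠ 0 →
      ∀ x : EuclideanSpace ℝ (Fin n),
        (∀ j, |x j| < sInf (Set.range lam) / ∑ j, |g 0 j|) →
        f 0 + l0norm blk lam 0 ≤ f x + l0norm blk lam x) ∧
    (g 0 = 0 →
      ∀ x : EuclideanSpace ℝ (Fin n),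
        f 0 + l0norm blk lam 0 ≤ f x + l0norm blk lam x) := by
  have hlam₀ : ∀ i, 0 ≤ lam i := fun i => (hlam i).le
  have hlin : ∀ x, ⟪g 0, x⟫_ℝ ≤ f x - f 0 := fun x => by
    simpa using hconv.inner_gradient_le_sub (Set.mem_univ 0) (Set.mem_univ x) (hgrad 0)
  simp only [l0norm_zero, add_zero]
  refine ⟨fun hg0 x hx => ?_, fun hg0 x => ?_⟩
  · rcases eq_or_ne x 0 with rfl | hx0
    · simp
    have hl1 : ∑ j, |g 0 j| ≠ 0 := fun h => hg0 <| PiLp.ext fun j => by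
      simpa using (sum_eq_zero_iff_of_nonneg fun j _ => abs_nonneg (g 0 j)).1 h j (mem_univ j)
    have hinner := abs_inner_le_of_forall_abs_le (g := g 0) fun j => (hx j).le
    rw [mul_div_cancel₀ _ hl1] at hinner
    linarith [neg_abs_le ⟪g 0, x⟫_ℝ, hlin x, sInf_range_le_l0norm blk hlam₀ hx0]
  · have := hlin x
    rw [hg0, inner_zero_left] at this
    linarith [l0norm_nonneg blk hlam₀ x]

/-- For `f` convex with block-coordinatewise Lipschitz gradient and all
`λᵢ > 0`: if `∇f(0) ≠ 0` then `0` is a local minimizer of `F = f + ‖·‖_{0,λ}` on the open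
`ℓ∞`-ball of radius `minᵢ λᵢ / ‖∇f(0)‖₁`; if `∇f(0) = 0` then `0` is a global minimizer
of `F`. -/
theorem statement1 {n N : ℕ} (hN : 0 < N) (blk : Fin n → Fin N) (lam : Fin N → ℝ)
    (hlam : ∀ i, 0 < lam i)
    (f : EuclideanSpace ℝ (Fin n) → ℝ)
    (g : EuclideanSpace ℝ (Fin n) → EuclideanSpace ℝ (Fin n))
    (hconv : ConvexOn ℝ Set.univ f)
    (hgrad : ∀ x, HasGradientAt f (g x) x)
    (L : Fin N → ℝ) (hL : ∀ i, 0 < L i)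
    (hLip : ∀ (i : Fin N) (x : EuclideanSpace ℝ (Fin n))
      (h : EuclideanSpace ℝ {j : Fin n // blk j = i}),
      ‖blkProj blk i (g (x + blkEmbed blk i h)) - blkProj blk i (g x)‖ ≤ L i * ‖h‖) :
    (g 0 ≠ 0 →
      ∀ x : EuclideanSpace ℝ (Fin n),
        (∀ j, |x j| < sInf (Set.range lam) / ∑ j, |g 0 j|) →
        f 0 + l0norm blk lam 0 ≤ f x + l0norm blk lam x) ∧
    (g 0 = 0 →
      ∀ x : EuclideanSpace ℝ (Fin n),
        f 0 + l0norm blk lam 0 ≤ f x + l0norm blk lam x) :=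
  statement1_general blk lam hlam f g hconv hgrad
end

section
/- Let f : ℝⁿ → ℝ be convex and differentiable and let y ∈ ℝⁿ, y ≠ 0, with ∇f(y) ≠ 0. Then for every d ∈ B_∞(0, r) with d ∉ S_{I(y)}, where r = min{ \underline{y}, \underline{λ}/‖∇f(y)‖₁ }, one has F(y + d) ≥ F(y). -/
/-!
Convexity gives `f (y + d) ≥ f y + ⟪∇f(y), d⟫ ≥ f y - r ‖∇f(y)‖₁ ≥ f y - \underline λ`.
On the other hand `‖d‖_∞ < \underline y` keeps every nonzero coordinate of `y` nonzero in
`y + d`, while `d ∉ S_{I(y)}` switches on a coordinate `j` with `y_j = 0` and `λ_{blk j} > 0`,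
so the penalty grows by at least `\underline λ`.
-/

open Finset

theorem ConvexOn.add_fderiv_sub_le {E : Type*} [NormedAddCommGroup E] [NormedSpace ℝ E]
    {s : Set E} {f : E → ℝ} {f' : E →L[ℝ] ℝ} {x y : E} (hf : ConvexOn ℝ s f)
    (hy : y ∈ s) (hx : x ∈ s) (hf' : HasFDerivAt f f' y) :
    f y + f' (x - y) ≤ f x := by
  have hφ : HasDerivAt (f ∘ AffineMap.lineMap (k := ℝ) y x) (f' (x - y)) 0 :=
    hf'.comp_hasDerivAt_of_eq (0 : ℝ) AffineMap.hasDerivAt_lineMap (by simp)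
  have := (hf.comp_affineMap (AffineMap.lineMap y x)).le_slope_of_hasDerivAt
    (by simpa using hy) (by simpa using hx) zero_lt_one hφ
  simp only [slope_def_field, Function.comp_apply, AffineMap.lineMap_apply_zero,
    AffineMap.lineMap_apply_one, sub_zero, div_one] at this
  linarith

theorem ConvexOn.add_inner_gradient_le {E : Type*} [NormedAddCommGroup E]
    [InnerProductSpace ℝ E] [CompleteSpace E] {s : Set E} {f : E → ℝ} {g x y : E}
    (hf : ConvexOn ℝ s f) (hy : y ∈ s) (hx : x ∈ s) (hg : HasGradientAt f g y) :
    f y + inner ℝ g (x - y) ≤ f x :=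
  hf.add_fderiv_sub_le hy hx hg.hasFDerivAt

theorem abs_inner_le_sum_abs_mul {ι : Type*} [Fintype ι] {x d : EuclideanSpace ℝ ι} {r : ℝ}
    (hd : ∀ j, |d j| ≤ r) : |inner ℝ x d| ≤ (∑ j, |x j|) * r := by
  rw [PiLp.inner_apply, sum_mul]
  refine (abs_sum_le_sum_abs _ _).trans (sum_le_sum fun j _ => ?_)
  rw [Real.inner_apply, abs_mul]
  exact mul_le_mul_of_nonneg_left (hd j) (abs_nonneg _)

theorem sInf_setOf_exists_le_s2 {α ι : Type*} [ConditionallyCompleteLattice α] [Finite ι]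
    {P : ι → Prop} (h : ι → α) {j : ι}
    (hj : P j) : sInf {t | ∃ i, P i ∧ t = h i} ≤ h j :=
  csInf_le ((Set.finite_range h).subset (by rintro _ ⟨i, -, rfl⟩; exact ⟨i, rfl⟩)).bddBelow
    ⟨j, hj, rfl⟩

theorem add_ne_zero_of_abs_lt {α : Type*} [AddCommGroup α] [LinearOrder α]
    [IsOrderedAddMonoid α] {a b : α} (h : |b| < |a|) : a + b ≠ 0 := by
  intro hab
  rw [eq_neg_of_add_eq_zero_left hab, abs_neg] at h
  exact lt_irrefl _ h

theorem l0norm_add_le_of_support_subset {n N : ℕ} {blk : Fin n → Fin N} {lam : Fin N → ℝ}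
    (hlam : ∀ i, 0 ≤ lam i) {x z : EuclideanSpace ℝ (Fin n)}
    (hsupp : ∀ j, x j ≠ 0 → z j ≠ 0) {j₀ : Fin n} (hx : x j₀ = 0) (hz : z j₀ ≠ 0) :
    l0norm blk lam x + lam (blk j₀) ≤ l0norm blk lam z := by
  have hterm : ∀ j, ((if x j ≠ 0 then lam (blk j) else 0) + if j = j₀ then lam (blk j₀) else 0)
      ≤ if z j ≠ 0 then lam (blk j) else 0 := by
    intro j
    by_cases hj : j = j₀
    · subst hj
      simp [hx, hz]
    · by_cases hxj : x j ≠ 0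
      · simp [hj, hxj, hsupp j hxj]
      · split_ifs <;> simp_all
  simpa [l0norm, sum_add_distrib] using sum_le_sum fun j (_ : j ∈ univ) => hterm j

theorem statement2_general {n N : ℕ} (blk : Fin n → Fin N) (lam : Fin N → ℝ)
    (hlam : ∀ i, 0 ≤ lam i)
    (f : EuclideanSpace ℝ (Fin n) → ℝ)
    (g : EuclideanSpace ℝ (Fin n) → EuclideanSpace ℝ (Fin n))
    (hconv : ConvexOn ℝ Set.univ f)
    (hgrad : ∀ x, HasGradientAt f (g x) x)
    (y : EuclideanSpace ℝ (Fin n))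
    (r : ℝ)
    (hr : r = min (sInf {t : ℝ | ∃ j, y j ≠ 0 ∧ t = |y j|})
      (sInf {t : ℝ | ∃ i, 0 < lam i ∧ t = lam i} / ∑ j, |g y j|))
    (d : EuclideanSpace ℝ (Fin n))
    (hd_ball : ∀ j, |d j| < r)
    (hd_out : ∃ j, ¬ InIset blk lam y j ∧ d j ≠ 0) :
    f y + l0norm blk lam y ≤ f (y + d) + l0norm blk lam (y + d) := by
  obtain ⟨j₀, hj₀, hdj₀⟩ := hd_out
  obtain ⟨hyj₀, hlamj₀⟩ := not_or.mp hj₀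
  rw [not_ne_iff] at hyj₀
  set Λ := sInf {t : ℝ | ∃ i, 0 < lam i ∧ t = lam i}
  have hlamj₀_pos : 0 < lam (blk j₀) := (hlam _).lt_of_ne' hlamj₀
  have hΛ : Λ ≤ lam (blk j₀) := sInf_setOf_exists_le_s2 lam hlamj₀_pos
  have hrS : r * ∑ j, |g y j| ≤ Λ :=
    mul_le_of_le_div₀ (Real.sInf_nonneg fun _ ⟨_, hi, ht⟩ => ht ▸ hi.le)
      (sum_nonneg fun _ _ => abs_nonneg _) (hr ▸ min_le_right _ _)
  have hsupp : ∀ j, y j ≠ 0 → (y + d) j ≠ 0 := fun j hj =>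
    add_ne_zero_of_abs_lt <| (hd_ball j).trans_le <|
      (hr ▸ min_le_left _ _).trans (sInf_setOf_exists_le_s2 (fun j => |y j|) hj)
  have hpenalty : l0norm blk lam y + lam (blk j₀) ≤ l0norm blk lam (y + d) :=
    l0norm_add_le_of_support_subset hlam hsupp hyj₀ (by simpa [hyj₀] using hdj₀)
  have hdescent : f y + inner ℝ (g y) d ≤ f (y + d) := by
    simpa using hconv.add_inner_gradient_le (x := y + d) trivial trivial (hgrad y)
  have hinner : |inner ℝ (g y) d| ≤ (∑ j, |g y j|) * r :=
    abs_inner_le_sum_abs_mul fun j => (hd_ball j).le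
  linarith [neg_abs_le (inner ℝ (g y) d)]

/-- For `f` convex and differentiable, `y ≠ 0` with `∇f(y) ≠ 0`, and any
`d` with `‖d‖_∞ < r := min{\underline y, \underline λ/‖∇f(y)‖₁}` and `d ∉ S_{I(y)}`, one
has `F(y + d) ≥ F(y)` where `F = f + ‖·‖_{0,λ}`. -/
theorem statement2 {n N : ℕ} (blk : Fin n → Fin N) (lam : Fin N → ℝ)
    (hlam : ∀ i, 0 ≤ lam i) (hlam_pos : ∃ i, 0 < lam i)
    (f : EuclideanSpace ℝ (Fin n) → ℝ)
    (g : EuclideanSpace ℝ (Fin n) → EuclideanSpace ℝ (Fin n))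
    (hconv : ConvexOn ℝ Set.univ f)
    (hgrad : ∀ x, HasGradientAt f (g x) x)
    (y : EuclideanSpace ℝ (Fin n)) (hy : y ≠ 0) (hgy : g y ≠ 0)
    (r : ℝ)
    (hr : r = min (sInf {t : ℝ | ∃ j, y j ≠ 0 ∧ t = |y j|})
      (sInf {t : ℝ | ∃ i, 0 < lam i ∧ t = lam i} / ∑ j, |g y j|))
    (d : EuclideanSpace ℝ (Fin n))
    (hd_ball : ∀ j, |d j| < r)
    (hd_out : ∃ j, ¬ InIset blk lam y j ∧ d j ≠ 0) :
    f y + l0norm blk lam y ≤ f (y + d) + l0norm blk lam (y + d) :=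
  statement2_general blk lam hlam f g hconv hgrad y r hr d hd_ball hd_out
end

section
/- If f : ℝⁿ → ℝ is strongly convex and differentiable, then the set of basic local minimizers 𝒯_f = { z ∈ ℝⁿ : ∇_{(j)} f(z) = 0 for all j ∈ I(z) } is finite. -/
open scoped RealInnerProductSpace

/-- If `f` is strongly convex and differentiable, then the set of basic
local minimizers `𝒯_f = { z : ∇_{(j)} f(z) = 0 for all j ∈ I(z) }` is finite. -/
theorem statement3 {n N : ℕ} (blk : Fin n → Fin N) (lam : Fin N → ℝ)
    (hlam : ∀ i, 0 ≤ lam i)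
    (f : EuclideanSpace ℝ (Fin n) → ℝ)
    (g : EuclideanSpace ℝ (Fin n) → EuclideanSpace ℝ (Fin n))
    (hgrad : ∀ x, HasGradientAt f (g x) x)
    (σ : ℝ) (hσ : 0 < σ)
    (hstrong : ∀ x y : EuclideanSpace ℝ (Fin n),
      f x + ⟪g x, y - x⟫ + σ / 2 * ‖y - x‖ ^ 2 ≤ f y) :
    {z : EuclideanSpace ℝ (Fin n) | ∀ j, InIset blk lam z j → g z j = 0}.Finite := by
  apply Set.Finite.of_finite_image
    (f := fun z => {j : Fin n | InIset blk lam z j}) (Set.toFinite _)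
  intro z hz w hw hS
  simp only [Set.mem_setOf_eq] at hz hw
  have hiff : ∀ j, InIset blk lam z j ↔ InIset blk lam w j := fun j => Set.ext_iff.mp hS j
  have key : ∀ (a b : EuclideanSpace ℝ (Fin n)),
      (∀ j, InIset blk lam a j → g a j = 0) →
      (∀ j, ¬ InIset blk lam a j → a j = 0 ∧ b j = 0) →
      ⟪g a, b - a⟫ = 0 := by
    intro a b ha hb
    rw [PiLp.inner_apply]
    apply Finset.sum_eq_zero
    intro j _
    by_cases h : InIset blk lam a j
    · simp [ha j h]
    · obtain ⟨h1, h2⟩ := hb j h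
      simp [h1, h2]
  have hzw : ⟪g z, w - z⟫ = 0 := by
    apply key z w hz
    intro j hj
    have hz0 : z j = 0 := by
      by_contra hc; exact hj (Or.inl hc)
    have hw0 : w j = 0 := by
      by_contra hc; exact hj ((hiff j).mpr (Or.inl hc))
    exact ⟨hz0, hw0⟩
  have hwz : ⟪g w, z - w⟫ = 0 := by
    apply key w z hw
    intro j hj
    have hw0 : w j = 0 := by
      by_contra hc; exact hj (Or.inl hc)
    have hz0 : z j = 0 := by
      by_contra hc; exact hj ((hiff j).mp (Or.inl hc))
    exact ⟨hw0, hz0⟩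
  have h1 := hstrong z w
  have h2 := hstrong w z
  rw [hzw] at h1
  rw [hwz] at h2
  rw [norm_sub_rev] at h2
  have hn : ‖w - z‖ ^ 2 ≤ 0 := by nlinarith
  have : w - z = 0 := by
    have := sq_nonneg ‖w - z‖
    have : ‖w - z‖ ^ 2 = 0 := le_antisymm hn this
    simpa [pow_eq_zero_iff, sub_eq_zero] using this
  have : z = w := by
    have := sub_eq_zero.mp this
    exact this.symm
  exact this
end

section
/- Let f satisfy Assumption 1 and let the approximation functions u_i satisfy Assumption 2. Then every u-strong local minimizer z ∈ 𝓛_u satisfies ∇_{(j)} f(z) = 0 for all j ∈ I(z); hence 𝓛_u ⊆ 𝒯_f, i.e. every u-strong local minimizer is a basic local minimizer (and thus a local minimum) of F. -/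
open scoped RealInnerProductSpace
open Finset

/-- Assumption 2 on the family of approximation functions `uᵢ(·;·)`, with gradients
(in the first argument) `guᵢ`, Lipschitz constants `Mᵢ > Lᵢ` and curvature constants
`μᵢ ∈ (0, Mᵢ - Lᵢ]`. -/
structure ApproxAssumption {n N : ℕ} (blk : Fin n → Fin N)
    (f : EuclideanSpace ℝ (Fin n) → ℝ)
    (g : EuclideanSpace ℝ (Fin n) → EuclideanSpace ℝ (Fin n))
    (L : Fin N → ℝ)
    (u : ∀ i : Fin N, EuclideanSpace ℝ {j : Fin n // blk j = i} →
      EuclideanSpace ℝ (Fin n) → ℝ)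
    (gu : ∀ i : Fin N, EuclideanSpace ℝ {j : Fin n // blk j = i} →
      EuclideanSpace ℝ (Fin n) → EuclideanSpace ℝ {j : Fin n // blk j = i})
    (M μ : Fin N → ℝ) : Prop where
  strictConvexOn : ∀ i x, StrictConvexOn ℝ Set.univ (fun v => u i v x)
  hasGradient : ∀ i x v, HasGradientAt (fun w => u i w x) (gu i v x) v
  continuous_second : ∀ i v, Continuous fun x => u i v x
  value_at : ∀ i x, u i (blkProj blk i x) x = f x
  gradient_at : ∀ i x, gu i (blkProj blk i x) x = blkProj blk i (g x)
  lipschitz_grad : ∀ i x v w, ‖gu i v x - gu i w x‖ ≤ M i * ‖v - w‖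
  M_gt_L : ∀ i, L i < M i
  mu_pos : ∀ i, 0 < μ i
  mu_le : ∀ i, μ i ≤ M i - L i
  lower_bound : ∀ i x v,
    f (x + blkEmbed blk i (v - blkProj blk i x)) + μ i / 2 * ‖v - blkProj blk i x‖ ^ 2
      ≤ u i v x

/-- `z` is a `u`-strong local minimizer: `F(z) ≤ min_{yᵢ} uᵢ(yᵢ;z) + ‖z + Uᵢ(yᵢ - zᵢ)‖_{0,λ}`
for all blocks `i`. -/
def IsUStrongLocalMin {n N : ℕ} (blk : Fin n → Fin N) (lam : Fin N → ℝ)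
    (f : EuclideanSpace ℝ (Fin n) → ℝ)
    (u : ∀ i : Fin N, EuclideanSpace ℝ {j : Fin n // blk j = i} →
      EuclideanSpace ℝ (Fin n) → ℝ)
    (z : EuclideanSpace ℝ (Fin n)) : Prop :=
  ∀ (i : Fin N) (y : EuclideanSpace ℝ {j : Fin n // blk j = i}),
    f z + l0norm blk lam z ≤
      u i y z + l0norm blk lam (z + blkEmbed blk i (y - blkProj blk i z))

/-! At a `u`-strong local minimizer `z`, moving one coordinate `j ∈ I(z)` of `z` by a small `t`
leaves `‖·‖_{0,λ}` unchanged: either `λ` vanishes on the block of `j`, or `z_j ≠ 0` stays nonzero.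
Hence `t ↦ uᵢ(zᵢ + t eⱼ; z)` has a local minimum at `t = 0`, and its derivative there,
`∇uᵢ(zᵢ; z)ⱼ = ∇ⱼ f(z)`, vanishes. -/

open Filter Topology

section Coordinates

variable {n N : ℕ} (blk : Fin n → Fin N)

theorem blkEmbed_single (j : Fin n) (t : ℝ) :
    blkEmbed blk (blk j) (EuclideanSpace.single ⟨j, rfl⟩ t) = EuclideanSpace.single j t := by
  ext k
  by_cases hk : k = j
  · subst hk
    simp [blkEmbed]
  · simp [blkEmbed, hk]

variable {lam : Fin N → ℝ} {x : EuclideanSpace ℝ (Fin n)} {j : Fin n}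

theorem l0norm_add_single (hj : InIset blk lam x j) {t : ℝ} (ht : x j ≠ 0 → x j + t ≠ 0) :
    l0norm blk lam (x + EuclideanSpace.single j t) = l0norm blk lam x := by
  refine Finset.sum_congr rfl fun k _ => ?_
  by_cases hk : k = j
  · subst hk
    rcases hj with hj | hj <;> simp [hj, ht]
  · simp [hk]

theorem eventually_l0norm_add_single (hj : InIset blk lam x j) :
    ∀ᶠ t in 𝓝 0, l0norm blk lam (x + EuclideanSpace.single j t) = l0norm blk lam x := by
  have hne : ∀ᶠ t in 𝓝 (0 : ℝ), x j ≠ 0 → x j + t ≠ 0 := by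
    by_cases hxj : x j = 0
    · exact .of_forall fun _ h => absurd hxj h
    · have hcont : Continuous fun t : ℝ => x j + t := by fun_prop
      exact (hcont.continuousAt.eventually_ne (by simpa using hxj)).mono fun _ h _ => h
  exact hne.mono fun _ => l0norm_add_single blk hj

end Coordinates

theorem HasGradientAt.hasDerivAt_add_single {ι : Type*} [Fintype ι] [DecidableEq ι]
    {φ : EuclideanSpace ℝ ι → ℝ} {φ' v : EuclideanSpace ℝ ι} (h : HasGradientAt φ φ' v)
    (k : ι) : HasDerivAt (fun t => φ (v + EuclideanSpace.single k t)) (φ' k) 0 := by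
  have hsingle (t : ℝ) : EuclideanSpace.single k t = t • EuclideanSpace.single k (1 : ℝ) := by
    ext m
    by_cases hm : m = k <;> simp [hm]
  have hline : HasDerivAt (fun t => v + EuclideanSpace.single k t)
      (EuclideanSpace.single k (1 : ℝ)) 0 := by
    rw [show (fun t => v + EuclideanSpace.single k t) = fun t => v + t • EuclideanSpace.single k 1
      from funext fun t => by rw [hsingle t]]
    simpa using ((hasDerivAt_id (0 : ℝ)).smul_const (EuclideanSpace.single k (1 : ℝ))).const_add v
  have hφ : HasFDerivAt φ (InnerProductSpace.toDual ℝ _ φ')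
      (v + EuclideanSpace.single k (0 : ℝ)) := by
    rw [hsingle 0, zero_smul, add_zero]
    exact h.hasFDerivAt
  have hcomp := hφ.comp_hasDerivAt 0 hline
  rw [InnerProductSpace.toDual_apply_apply, EuclideanSpace.inner_single_right] at hcomp
  simp only [RCLike.conj_to_real, one_mul] at hcomp
  exact hcomp

theorem IsUStrongLocalMin.isLocalMin_add_single {n N : ℕ} {blk : Fin n → Fin N}
    {lam : Fin N → ℝ} {f : EuclideanSpace ℝ (Fin n) → ℝ}
    {u : ∀ i : Fin N, EuclideanSpace ℝ {j : Fin n // blk j = i} →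
      EuclideanSpace ℝ (Fin n) → ℝ}
    {z : EuclideanSpace ℝ (Fin n)} (hz : IsUStrongLocalMin blk lam f u z) {j : Fin n}
    (hval : u (blk j) (blkProj blk (blk j) z) z = f z) (hj : InIset blk lam z j) :
    IsLocalMin (fun t => u (blk j) (blkProj blk (blk j) z + EuclideanSpace.single ⟨j, rfl⟩ t) z)
      0 := by
  filter_upwards [eventually_l0norm_add_single blk hj] with t hl0
  have hle := hz (blk j) (blkProj blk (blk j) z + EuclideanSpace.single ⟨j, rfl⟩ t)
  rw [add_sub_cancel_left, blkEmbed_single, hl0] at hle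
  simpa [(PiLp.single_eq_zero_iff _ _).2 rfl, hval] using hle

theorem statement4_general {n N : ℕ} (blk : Fin n → Fin N) (lam : Fin N → ℝ)
    (f : EuclideanSpace ℝ (Fin n) → ℝ)
    (g : EuclideanSpace ℝ (Fin n) → EuclideanSpace ℝ (Fin n))
    (L : Fin N → ℝ)
    (u : ∀ i : Fin N, EuclideanSpace ℝ {j : Fin n // blk j = i} →
      EuclideanSpace ℝ (Fin n) → ℝ)
    (gu : ∀ i : Fin N, EuclideanSpace ℝ {j : Fin n // blk j = i} →
      EuclideanSpace ℝ (Fin n) → EuclideanSpace ℝ {j : Fin n // blk j = i})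
    (M μ : Fin N → ℝ)
    (hu : ApproxAssumption blk f g L u gu M μ)
    (z : EuclideanSpace ℝ (Fin n))
    (hz : IsUStrongLocalMin blk lam f u z) :
    ∀ j, InIset blk lam z j → g z j = 0 := by
  intro j hj
  have hmin := hz.isLocalMin_add_single (hu.value_at (blk j) z) hj
  have hderiv := (hu.hasGradient (blk j) z (blkProj blk (blk j) z)).hasDerivAt_add_single
    ⟨j, rfl⟩
  have hcrit := hmin.hasDerivAt_eq_zero hderiv
  rwa [hu.gradient_at] at hcrit

/-- Under Assumptions 1 and 2, every `u`-strong local minimizer `z`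
satisfies `∇_{(j)} f(z) = 0` for all `j ∈ I(z)`; hence `𝓛_u ⊆ 𝒯_f`. -/
theorem statement4 {n N : ℕ} (blk : Fin n → Fin N) (lam : Fin N → ℝ)
    (hlam : ∀ i, 0 ≤ lam i) (hlam_pos : ∃ i, 0 < lam i)
    (f : EuclideanSpace ℝ (Fin n) → ℝ)
    (g : EuclideanSpace ℝ (Fin n) → EuclideanSpace ℝ (Fin n))
    (hconv : ConvexOn ℝ Set.univ f)
    (hgrad : ∀ x, HasGradientAt f (g x) x)
    (L : Fin N → ℝ) (hL : ∀ i, 0 < L i)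
    (hLip : ∀ (i : Fin N) (x : EuclideanSpace ℝ (Fin n))
      (h : EuclideanSpace ℝ {j : Fin n // blk j = i}),
      ‖blkProj blk i (g (x + blkEmbed blk i h)) - blkProj blk i (g x)‖ ≤ L i * ‖h‖)
    (u : ∀ i : Fin N, EuclideanSpace ℝ {j : Fin n // blk j = i} →
      EuclideanSpace ℝ (Fin n) → ℝ)
    (gu : ∀ i : Fin N, EuclideanSpace ℝ {j : Fin n // blk j = i} →
      EuclideanSpace ℝ (Fin n) → EuclideanSpace ℝ {j : Fin n // blk j = i})
    (M μ : Fin N → ℝ)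
    (hu : ApproxAssumption blk f g L u gu M μ)
    (z : EuclideanSpace ℝ (Fin n))
    (hz : IsUStrongLocalMin blk lam f u z) :
    ∀ j, InIset blk lam z j → g z j = 0 :=
  statement4_general blk lam f g L u gu M μ hu z hz
end

section
/- Let f satisfy Assumption 1 and u satisfy Assumption 2, and suppose the minimizer T^u_i(x) = argmin_{y_i ∈ ℝ^{n_i}} u_i(y_i;x) + λ_i‖y_i‖₀ is attained. Then for any x ∈ ℝⁿ and any i ∈ [N], the point x⁺ = x + U_i(T^u_i(x) − x_i) satisfies F(x⁺) ≤ F(x) − (μ_i/2)‖T^u_i(x) − x_i‖². -/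
open scoped RealInnerProductSpace
open Finset

/-- The number of nonzero entries of a block vector, `‖yᵢ‖₀`, as a real number. -/
noncomputable def blkNnz {n N : ℕ} {blk : Fin n → Fin N} {i : Fin N}
    (v : EuclideanSpace ℝ {j : Fin n // blk j = i}) : ℝ :=
  ∑ j, if v j ≠ 0 then (1 : ℝ) else 0

/-
The ℓ₀ penalty is block separable, so replacing the block `xᵢ` by `Tᵢ(x)` changes it by
`λᵢ(‖Tᵢ(x)‖₀ - ‖xᵢ‖₀)`. Comparing the value of the block subproblem at its minimizer `Tᵢ(x)`
with its value at `xᵢ`, where `uᵢ(xᵢ;x) = f(x)`, and using the majorization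
`f(x⁺) + (μᵢ/2)‖Tᵢ(x) - xᵢ‖² ≤ uᵢ(Tᵢ(x);x)` gives the descent.
-/

section Blocks

variable {n N : ℕ} (blk : Fin n → Fin N)

lemma blkProj_add (i : Fin N) (x y : EuclideanSpace ℝ (Fin n)) :
    blkProj blk i (x + y) = blkProj blk i x + blkProj blk i y :=
  rfl

lemma blkProj_blkEmbed_self (i : Fin N) (v : EuclideanSpace ℝ {j : Fin n // blk j = i}) :
    blkProj blk i (blkEmbed blk i v) = v := by
  ext j
  simp [blkProj, blkEmbed, j.2]

lemma blkProj_blkEmbed_of_ne {i i' : Fin N} (hne : i' ≠ i)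
    (v : EuclideanSpace ℝ {j : Fin n // blk j = i}) :
    blkProj blk i' (blkEmbed blk i v) = 0 := by
  ext j
  have : blk j.1 ≠ i := by rw [j.2]; exact hne
  simp [blkProj, blkEmbed, this]

lemma l0norm_eq_sum_mul_blkNnz (lam : Fin N → ℝ) (x : EuclideanSpace ℝ (Fin n)) :
    l0norm blk lam x = ∑ i, lam i * blkNnz (blkProj blk i x) := by
  rw [l0norm, ← Fintype.sum_fiberwise blk]
  refine Finset.sum_congr rfl fun i _ => ?_
  rw [blkNnz, Finset.mul_sum]
  refine Finset.sum_congr rfl fun j _ => ?_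
  by_cases hj : x j = 0 <;> simp [blkProj, j.2, hj]

lemma l0norm_add_blkEmbed_sub_blkProj (lam : Fin N → ℝ) (i : Fin N)
    (x : EuclideanSpace ℝ (Fin n)) (v : EuclideanSpace ℝ {j : Fin n // blk j = i}) :
    l0norm blk lam (x + blkEmbed blk i (v - blkProj blk i x)) + lam i * blkNnz (blkProj blk i x)
      = l0norm blk lam x + lam i * blkNnz v := by
  have hother : ∀ i' ∈ Finset.univ.erase i,
      lam i' * blkNnz (blkProj blk i' (x + blkEmbed blk i (v - blkProj blk i x)))
        = lam i' * blkNnz (blkProj blk i' x) := fun i' hi' => by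
    rw [blkProj_add, blkProj_blkEmbed_of_ne blk (Finset.ne_of_mem_erase hi'), add_zero]
  have hself : blkProj blk i (x + blkEmbed blk i (v - blkProj blk i x)) = v := by
    rw [blkProj_add, blkProj_blkEmbed_self, add_sub_cancel]
  simp only [l0norm_eq_sum_mul_blkNnz, ← Finset.add_sum_erase _ _ (Finset.mem_univ i),
    Finset.sum_congr rfl hother, hself]
  ring

end Blocks

theorem statement8_general {n N : ℕ} (blk : Fin n → Fin N) (lam : Fin N → ℝ)
    (f : EuclideanSpace ℝ (Fin n) → ℝ)
    (g : EuclideanSpace ℝ (Fin n) → EuclideanSpace ℝ (Fin n))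
    (L : Fin N → ℝ)
    (u : ∀ i : Fin N, EuclideanSpace ℝ {j : Fin n // blk j = i} →
      EuclideanSpace ℝ (Fin n) → ℝ)
    (gu : ∀ i : Fin N, EuclideanSpace ℝ {j : Fin n // blk j = i} →
      EuclideanSpace ℝ (Fin n) → EuclideanSpace ℝ {j : Fin n // blk j = i})
    (M μ : Fin N → ℝ)
    (hu : ApproxAssumption blk f g L u gu M μ)
    (T : ∀ i : Fin N, EuclideanSpace ℝ (Fin n) →
      EuclideanSpace ℝ {j : Fin n // blk j = i})
    (hT : ∀ (i : Fin N) (x : EuclideanSpace ℝ (Fin n))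
      (y : EuclideanSpace ℝ {j : Fin n // blk j = i}),
      u i (T i x) x + lam i * blkNnz (T i x) ≤ u i y x + lam i * blkNnz y) :
    ∀ (x : EuclideanSpace ℝ (Fin n)) (i : Fin N),
      f (x + blkEmbed blk i (T i x - blkProj blk i x))
          + l0norm blk lam (x + blkEmbed blk i (T i x - blkProj blk i x))
        ≤ f x + l0norm blk lam x - μ i / 2 * ‖T i x - blkProj blk i x‖ ^ 2 := by
  intro x i
  have hmajorize := hu.lower_bound i x (T i x)
  have hoptimal := hT i x (blkProj blk i x)
  rw [hu.value_at i x] at hoptimal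
  have hl0 := l0norm_add_blkEmbed_sub_blkProj blk lam i x (T i x)
  linarith

/-- One step of the block iterative hard-thresholding map decreases
`F` by at least `(μᵢ/2)‖T^u_i(x) - xᵢ‖²`. -/
theorem statement8 {n N : ℕ} (blk : Fin n → Fin N) (lam : Fin N → ℝ)
    (hlam : ∀ i, 0 ≤ lam i) (hlam_pos : ∃ i, 0 < lam i)
    (f : EuclideanSpace ℝ (Fin n) → ℝ)
    (g : EuclideanSpace ℝ (Fin n) → EuclideanSpace ℝ (Fin n))
    (hconv : ConvexOn ℝ Set.univ f)
    (hgrad : ∀ x, HasGradientAt f (g x) x)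
    (L : Fin N → ℝ) (hL : ∀ i, 0 < L i)
    (hLip : ∀ (i : Fin N) (x : EuclideanSpace ℝ (Fin n))
      (h : EuclideanSpace ℝ {j : Fin n // blk j = i}),
      ‖blkProj blk i (g (x + blkEmbed blk i h)) - blkProj blk i (g x)‖ ≤ L i * ‖h‖)
    (u : ∀ i : Fin N, EuclideanSpace ℝ {j : Fin n // blk j = i} →
      EuclideanSpace ℝ (Fin n) → ℝ)
    (gu : ∀ i : Fin N, EuclideanSpace ℝ {j : Fin n // blk j = i} →
      EuclideanSpace ℝ (Fin n) → EuclideanSpace ℝ {j : Fin n // blk j = i})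
    (M μ : Fin N → ℝ)
    (hu : ApproxAssumption blk f g L u gu M μ)
    (T : ∀ i : Fin N, EuclideanSpace ℝ (Fin n) →
      EuclideanSpace ℝ {j : Fin n // blk j = i})
    (hT : ∀ (i : Fin N) (x : EuclideanSpace ℝ (Fin n))
      (y : EuclideanSpace ℝ {j : Fin n // blk j = i}),
      u i (T i x) x + lam i * blkNnz (T i x) ≤ u i y x + lam i * blkNnz y) :
    ∀ (x : EuclideanSpace ℝ (Fin n)) (i : Fin N),
      f (x + blkEmbed blk i (T i x - blkProj blk i x))
          + l0norm blk lam (x + blkEmbed blk i (T i x - blkProj blk i x))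
        ≤ f x + l0norm blk lam x - μ i / 2 * ‖T i x - blkProj blk i x‖ ^ 2 :=
  statement8_general blk lam f g L u gu M μ hu T hT
end

section
/- Let f satisfy Assumption 1 and u satisfy Assumption 2, and let (x^k)_{k≥0} be the random sequence generated by the RCD-IHT algorithm. Then there exists a nonnegative random variable F̃ such that F(x^k) → F̃ almost surely, and ‖x^{k+1} − x^k‖ → 0 almost surely. -/
open scoped RealInnerProductSpace
open Finset

/-- One iteration of the (RCD-IHT) method: block `i` of `x` is replaced by `T i x`. -/
noncomputable def rcdStep {n N : ℕ} (blk : Fin n → Fin N)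
    (T : ∀ i : Fin N, EuclideanSpace ℝ (Fin n) →
      EuclideanSpace ℝ {j : Fin n // blk j = i})
    (i : Fin N) (x : EuclideanSpace ℝ (Fin n)) : EuclideanSpace ℝ (Fin n) :=
  x + blkEmbed blk i (T i x - blkProj blk i x)

/-!
Every RCD-IHT step is a sufficient-decrease step, whichever block is drawn: `uᵢ(·; x)` majorizes
`f` along block `i` up to `μᵢ/2 ‖·‖²` and agrees with `f` at `xᵢ`, while `Tᵢ x` minimizes
`uᵢ(·; x) + λᵢ‖·‖₀`, so `F(xᵏ⁺¹) + μ/2 ‖xᵏ⁺¹ - xᵏ‖² ≤ F(xᵏ)` with `μ = minᵢ μᵢ`. Hence along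
every realization `F(xᵏ)` is nonincreasing and bounded below, so it converges to its infimum; then
`F(xᵏ) - F(xᵏ⁺¹) → 0`, which bounds the steps.
-/

section Blocks

variable {n N : ℕ} (blk : Fin n → Fin N) (i : Fin N)

lemma sum_filter_eq_sum_subtype (φ : Fin n → ℝ) :
    ∑ j ∈ univ.filter (fun j => blk j = i), φ j = ∑ j : {j : Fin n // blk j = i}, φ j.1 :=
  Finset.sum_subtype _ (by simp) φ

lemma norm_blkEmbed (v : EuclideanSpace ℝ {j : Fin n // blk j = i}) :
    ‖blkEmbed blk i v‖ = ‖v‖ := by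
  rw [EuclideanSpace.norm_eq, EuclideanSpace.norm_eq,
    ← Finset.sum_filter_add_sum_filter_not univ (fun j => blk j = i),
    sum_filter_eq_sum_subtype,
    Finset.sum_eq_zero (s := univ.filter (fun j => ¬ blk j = i)) fun j hj => ?_]
  · rw [add_zero]
    exact congrArg _ (Finset.sum_congr rfl fun j _ => by simp [blkEmbed, j.2])
  · simp [blkEmbed, (Finset.mem_filter.mp hj).2]

lemma l0norm_eq_blkNnz_add (lam : Fin N → ℝ) (w : EuclideanSpace ℝ (Fin n)) :
    l0norm blk lam w = lam i * blkNnz (blkProj blk i w)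
      + ∑ j ∈ univ.filter (fun j => ¬ blk j = i), if w j ≠ 0 then lam (blk j) else 0 := by
  rw [l0norm, ← Finset.sum_filter_add_sum_filter_not univ (fun j => blk j = i),
    sum_filter_eq_sum_subtype, blkNnz, Finset.mul_sum]
  congr 1
  refine Finset.sum_congr rfl fun j _ => ?_
  simp only [blkProj, PiLp.toLp_apply, j.2]
  split_ifs <;> simp_all

variable (x : EuclideanSpace ℝ (Fin n)) (y : EuclideanSpace ℝ {j : Fin n // blk j = i})

lemma blkProj_add_blkEmbed_sub :
    blkProj blk i (x + blkEmbed blk i (y - blkProj blk i x)) = y := by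
  ext j
  simp [blkProj, blkEmbed, j.2]

lemma add_blkEmbed_sub_apply_of_ne {j : Fin n} (hj : blk j ≠ i) :
    (x + blkEmbed blk i (y - blkProj blk i x)) j = x j := by
  simp [blkEmbed, hj]

lemma l0norm_add_blkEmbed_sub (lam : Fin N → ℝ) :
    l0norm blk lam (x + blkEmbed blk i (y - blkProj blk i x)) + lam i * blkNnz (blkProj blk i x)
      = l0norm blk lam x + lam i * blkNnz y := by
  rw [l0norm_eq_blkNnz_add blk i, l0norm_eq_blkNnz_add blk i lam x, blkProj_add_blkEmbed_sub,
    Finset.sum_congr rfl fun j hj => by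
      rw [add_blkEmbed_sub_apply_of_ne blk i x y (Finset.mem_filter.mp hj).2]]
  ring

end Blocks

lemma rcdStep_sufficient_decrease {n N : ℕ} {blk : Fin n → Fin N} {lam : Fin N → ℝ}
    {f : EuclideanSpace ℝ (Fin n) → ℝ}
    {g : EuclideanSpace ℝ (Fin n) → EuclideanSpace ℝ (Fin n)} {L : Fin N → ℝ}
    {u : ∀ i : Fin N, EuclideanSpace ℝ {j : Fin n // blk j = i} →
      EuclideanSpace ℝ (Fin n) → ℝ}
    {gu : ∀ i : Fin N, EuclideanSpace ℝ {j : Fin n // blk j = i} →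
      EuclideanSpace ℝ (Fin n) → EuclideanSpace ℝ {j : Fin n // blk j = i}}
    {M μ : Fin N → ℝ} (hu : ApproxAssumption blk f g L u gu M μ)
    {T : ∀ i : Fin N, EuclideanSpace ℝ (Fin n) → EuclideanSpace ℝ {j : Fin n // blk j = i}}
    (hT : ∀ i x (y : EuclideanSpace ℝ {j : Fin n // blk j = i}),
      u i (T i x) x + lam i * blkNnz (T i x) ≤ u i y x + lam i * blkNnz y)
    (i : Fin N) (x : EuclideanSpace ℝ (Fin n)) :
    f (rcdStep blk T i x) + l0norm blk lam (rcdStep blk T i x)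
      + μ i / 2 * ‖rcdStep blk T i x - x‖ ^ 2 ≤ f x + l0norm blk lam x := by
  have hstep : rcdStep blk T i x - x = blkEmbed blk i (T i x - blkProj blk i x) := by
    rw [rcdStep, add_sub_cancel_left]
  have hmajor := hu.lower_bound i x (T i x)
  have hmin := hT i x (blkProj blk i x)
  have hl0 := l0norm_add_blkEmbed_sub blk i x (T i x) lam
  rw [hu.value_at] at hmin
  rw [hstep, norm_blkEmbed]
  unfold rcdStep
  linarith

lemma exists_pos_le_of_finite {ι : Type*} [Finite ι] {μ : ι → ℝ} (hμ : ∀ i, 0 < μ i) :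
    ∃ m > 0, ∀ i, m ≤ μ i := by
  cases isEmpty_or_nonempty ι
  · exact ⟨1, one_pos, isEmptyElim⟩
  · obtain ⟨i₀, hi₀⟩ := Finite.exists_min μ
    exact ⟨μ i₀, hμ i₀, hi₀⟩

open Filter in
lemma tendsto_ciInf_and_tendsto_zero_of_succ_add_le {a d : ℕ → ℝ} {c : ℝ} (hc : 0 < c)
    (hbdd : BddBelow (Set.range a)) (hd : ∀ k, 0 ≤ d k)
    (hdec : ∀ k, a (k + 1) + c * d k ^ 2 ≤ a k) :
    Tendsto a atTop (nhds (⨅ k, a k)) ∧ Tendsto d atTop (nhds 0) := by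
  have hanti : Antitone a :=
    antitone_nat_of_succ_le fun k => by nlinarith [hdec k, sq_nonneg (d k)]
  have hlim := tendsto_atTop_ciInf hanti hbdd
  refine ⟨hlim, ?_⟩
  have hgap : Tendsto (fun k => (a k - a (k + 1)) / c) atTop (nhds 0) := by
    simpa using (hlim.sub (hlim.comp (tendsto_add_atTop_nat 1))).div_const c
  have hsq : Tendsto (fun k => d k ^ 2) atTop (nhds 0) :=
    squeeze_zero (fun k => sq_nonneg _)
      (fun k => by rw [le_div_iff₀ hc]; linarith [hdec k]) hgap
  simpa [Real.sqrt_sq (hd _)] using hsq.sqrt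

open MeasureTheory Filter in
theorem statement10_general {n N : ℕ} (blk : Fin n → Fin N) (lam : Fin N → ℝ)
    (f : EuclideanSpace ℝ (Fin n) → ℝ)
    (g : EuclideanSpace ℝ (Fin n) → EuclideanSpace ℝ (Fin n))
    (L : Fin N → ℝ)
    (u : ∀ i : Fin N, EuclideanSpace ℝ {j : Fin n // blk j = i} →
      EuclideanSpace ℝ (Fin n) → ℝ)
    (gu : ∀ i : Fin N, EuclideanSpace ℝ {j : Fin n // blk j = i} →
      EuclideanSpace ℝ (Fin n) → EuclideanSpace ℝ {j : Fin n // blk j = i})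
    (M μ : Fin N → ℝ)
    (hu : ApproxAssumption blk f g L u gu M μ)
    (T : ∀ i : Fin N, EuclideanSpace ℝ (Fin n) →
      EuclideanSpace ℝ {j : Fin n // blk j = i})
    (hT : ∀ (i : Fin N) (x : EuclideanSpace ℝ (Fin n))
      (y : EuclideanSpace ℝ {j : Fin n // blk j = i}),
      u i (T i x) x + lam i * blkNnz (T i x) ≤ u i y x + lam i * blkNnz y)
    -- `F` is bounded below (by 0)
    (hFlb : ∀ x, 0 ≤ f x + l0norm blk lam x)
    -- probability space and i.i.d. uniform block selections
    {Ω : Type*} [MeasurableSpace Ω] (P : Measure Ω)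
    (ik : ℕ → Ω → Fin N)
    -- the (RCD-IHT) process
    (X : ℕ → Ω → EuclideanSpace ℝ (Fin n))
    (hXstep : ∀ (k : ℕ) (ω : Ω), X (k + 1) ω = rcdStep blk T (ik k ω) (X k ω)) :
    ∃ Ftilde : Ω → ℝ, (∀ ω, 0 ≤ Ftilde ω) ∧
      ∀ᵐ ω ∂P,
        Tendsto (fun k => f (X k ω) + l0norm blk lam (X k ω)) atTop (nhds (Ftilde ω)) ∧
        Tendsto (fun k => ‖X (k + 1) ω - X k ω‖) atTop (nhds 0) := by
  obtain ⟨m, hm, hmμ⟩ := exists_pos_le_of_finite hu.mu_pos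
  refine ⟨fun ω => ⨅ k, f (X k ω) + l0norm blk lam (X k ω), fun ω => le_ciInf fun k => hFlb _,
    Eventually.of_forall fun ω => ?_⟩
  refine tendsto_ciInf_and_tendsto_zero_of_succ_add_le (half_pos hm)
    ⟨0, by rintro _ ⟨k, rfl⟩; exact hFlb _⟩ (fun k => norm_nonneg _) fun k => ?_
  have hdec := rcdStep_sufficient_decrease (lam := lam) hu hT (ik k ω) (X k ω)
  have hμ : m / 2 * ‖X (k + 1) ω - X k ω‖ ^ 2 ≤ μ (ik k ω) / 2 * ‖X (k + 1) ω - X k ω‖ ^ 2 := by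
    gcongr
    exact hmμ _
  rw [← hXstep] at hdec
  linarith

open MeasureTheory Filter in
/-- Along the random sequence generated by (RCD-IHT), `F(xᵏ)` converges
almost surely to a nonnegative random variable `F̃`, and `‖xᵏ⁺¹ - xᵏ‖ → 0` almost surely. -/
theorem statement10 {n N : ℕ} (blk : Fin n → Fin N) (lam : Fin N → ℝ)
    (hlam : ∀ i, 0 ≤ lam i) (hlam_pos : ∃ i, 0 < lam i)
    (f : EuclideanSpace ℝ (Fin n) → ℝ)
    (g : EuclideanSpace ℝ (Fin n) → EuclideanSpace ℝ (Fin n))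
    (hconv : ConvexOn ℝ Set.univ f)
    (hgrad : ∀ x, HasGradientAt f (g x) x)
    (L : Fin N → ℝ) (hL : ∀ i, 0 < L i)
    (hLip : ∀ (i : Fin N) (x : EuclideanSpace ℝ (Fin n))
      (h : EuclideanSpace ℝ {j : Fin n // blk j = i}),
      ‖blkProj blk i (g (x + blkEmbed blk i h)) - blkProj blk i (g x)‖ ≤ L i * ‖h‖)
    (u : ∀ i : Fin N, EuclideanSpace ℝ {j : Fin n // blk j = i} →
      EuclideanSpace ℝ (Fin n) → ℝ)
    (gu : ∀ i : Fin N, EuclideanSpace ℝ {j : Fin n // blk j = i} →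
      EuclideanSpace ℝ (Fin n) → EuclideanSpace ℝ {j : Fin n // blk j = i})
    (M μ : Fin N → ℝ)
    (hu : ApproxAssumption blk f g L u gu M μ)
    (T : ∀ i : Fin N, EuclideanSpace ℝ (Fin n) →
      EuclideanSpace ℝ {j : Fin n // blk j = i})
    (hT : ∀ (i : Fin N) (x : EuclideanSpace ℝ (Fin n))
      (y : EuclideanSpace ℝ {j : Fin n // blk j = i}),
      u i (T i x) x + lam i * blkNnz (T i x) ≤ u i y x + lam i * blkNnz y)
    -- `F` is bounded below (by 0)
    (hFlb : ∀ x, 0 ≤ f x + l0norm blk lam x)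
    -- probability space and i.i.d. uniform block selections
    {Ω : Type*} [MeasurableSpace Ω] (P : Measure Ω) [IsProbabilityMeasure P]
    (ik : ℕ → Ω → Fin N) (hmeas : ∀ k, Measurable (ik k))
    (hindep : ProbabilityTheory.iIndepFun ik P)
    (hunif : ∀ (k : ℕ) (i : Fin N), P {ω | ik k ω = i} = (N : ENNReal)⁻¹)
    -- the (RCD-IHT) process
    (x0 : EuclideanSpace ℝ (Fin n)) (X : ℕ → Ω → EuclideanSpace ℝ (Fin n))
    (hX0 : ∀ ω, X 0 ω = x0)
    (hXstep : ∀ (k : ℕ) (ω : Ω), X (k + 1) ω = rcdStep blk T (ik k ω) (X k ω)) :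
    ∃ Ftilde : Ω → ℝ, (∀ ω, 0 ≤ Ftilde ω) ∧
      ∀ᵐ ω ∂P,
        Tendsto (fun k => f (X k ω) + l0norm blk lam (X k ω)) atTop (nhds (Ftilde ω)) ∧
        Tendsto (fun k => ‖X (k + 1) ω - X k ω‖) atTop (nhds 0) :=
  statement10_general blk lam f g L u gu M μ hu T hT hFlb P ik X hXstep
end

section
/- Consider the scalar case (n_i = 1 for all blocks, N = n), let f be convex with Lipschitz continuous gradient (global constant L_f), assume the set of basic local minimizers 𝒯_f is finite, and fix M_i > L_i. For the separable quadratic approximation u_i(y_i;x) = f(x) + ∇_i f(x)(y_i − x_i) + (M_i/2)|y_i − x_i|², the quantity Δ^i(x) = u_i(0;x) − min_{y_i ∈ ℝ} u_i(y_i;x) satisfies, for all x ∈ ℝⁿ and all z ∈ 𝒯_f: |Δ^i(x) − Δ^i(z)| ≤ M_i v^i_max (1 + L_f/M_i)‖x − z‖ + (M_i/2)(1 + L_f/M_i)² ‖x − z‖², where v^i_max = max{ |y_i − (1/M_i)∇_i f(y)| : y ∈ 𝒯_f }. -/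
open Finset

/-- The set of basic local minimizers `𝒯_f = {z : ∇ⱼf(z) = 0 for all j ∈ I(z)}` in the
scalar case, where `I(z) = supp(z) ∪ {j : λⱼ = 0}`. -/
def basicLocalMin {n : ℕ} (lam : Fin n → ℝ)
    (g : EuclideanSpace ℝ (Fin n) → EuclideanSpace ℝ (Fin n)) :
    Set (EuclideanSpace ℝ (Fin n)) :=
  {z | ∀ j, (z j ≠ 0 ∨ lam j = 0) → g z j = 0}

lemma coord_le {n : ℕ} (u : EuclideanSpace ℝ (Fin n)) (i : Fin n) : |u i| ≤ ‖u‖ := by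
  rw [EuclideanSpace.norm_eq, ← Real.sqrt_sq_eq_abs]
  apply Real.sqrt_le_sqrt
  have := Finset.single_le_sum (f := fun j => ‖u j‖ ^ 2)
    (fun j _ => sq_nonneg _) (Finset.mem_univ i)
  simpa [Real.norm_eq_abs, sq_abs] using this

/-- In the scalar case, for the separable quadratic approximation with
`Δⁱ(x) = (Mᵢ/2)|xᵢ - (1/Mᵢ)∇ᵢf(x)|²`, one has for all `x` and all `z ∈ 𝒯_f`:
`|Δⁱ(x) - Δⁱ(z)| ≤ Mᵢ vⁱ_max (1 + L_f/Mᵢ)‖x-z‖ + (Mᵢ/2)(1 + L_f/Mᵢ)²‖x-z‖²`. -/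
theorem statement13 {n : ℕ} (lam : Fin n → ℝ) (hlam : ∀ i, 0 ≤ lam i)
    (f : EuclideanSpace ℝ (Fin n) → ℝ)
    (g : EuclideanSpace ℝ (Fin n) → EuclideanSpace ℝ (Fin n))
    (hconv : ConvexOn ℝ Set.univ f)
    (hgrad : ∀ x, HasGradientAt f (g x) x)
    (Lf : ℝ) (hLf : ∀ x y, ‖g x - g y‖ ≤ Lf * ‖x - y‖)
    (L : Fin n → ℝ) (hL : ∀ i, 0 < L i)
    (hLip : ∀ (i : Fin n) (x : EuclideanSpace ℝ (Fin n)) (t : ℝ),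
      |g (x + EuclideanSpace.single i t) i - g x i| ≤ L i * |t|)
    (hTf : (basicLocalMin lam g).Finite)
    (M : Fin n → ℝ) (hM : ∀ i, L i < M i)
    (Δ : Fin n → EuclideanSpace ℝ (Fin n) → ℝ)
    (hΔ : ∀ i x, Δ i x = M i / 2 * (x i - g x i / M i) ^ 2)
    (vmax : Fin n → ℝ)
    (hvmax : ∀ i, vmax i =
      sSup {t : ℝ | ∃ y ∈ basicLocalMin lam g, t = |y i - g y i / M i|}) :
    ∀ (i : Fin n) (x : EuclideanSpace ℝ (Fin n)),
      ∀ z ∈ basicLocalMin lam g,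
        |Δ i x - Δ i z| ≤
          M i * vmax i * (1 + Lf / M i) * ‖x - z‖ +
            M i / 2 * (1 + Lf / M i) ^ 2 * ‖x - z‖ ^ 2 := by
  intro i x z hz
  have hMpos : 0 < M i := (hL i).trans (hM i)
  -- Lf ≥ 0
  have hLf0 : 0 ≤ Lf := by
    have h1 := hLf (EuclideanSpace.single i 1) 0
    have h2 : ‖(EuclideanSpace.single i 1 : EuclideanSpace ℝ (Fin n)) - 0‖ = 1 := by
      simp [EuclideanSpace.norm_single]
    nlinarith [norm_nonneg (g (EuclideanSpace.single i 1) - g 0)]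
  set vx := x i - g x i / M i with hvx
  set vz := z i - g z i / M i with hvz
  set D := ‖x - z‖ with hD
  have hD0 : 0 ≤ D := norm_nonneg _
  -- |vz| ≤ vmax i
  have hset : {t : ℝ | ∃ y ∈ basicLocalMin lam g, t = |y i - g y i / M i|}.Finite := by
    have : {t : ℝ | ∃ y ∈ basicLocalMin lam g, t = |y i - g y i / M i|}
        = (fun y => |y i - g y i / M i|) '' basicLocalMin lam g := by
      ext t; simp [eq_comm]
    rw [this]; exact hTf.image _
  have hvzle : |vz| ≤ vmax i := by
    rw [hvmax i]
    exact le_csSup hset.bddAbove ⟨z, hz, rfl⟩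
  -- |vx - vz| ≤ (1 + Lf/M i) * D
  have hcoord : |x i - z i| ≤ D := by
    have := coord_le (x - z) i
    simpa using this
  have hg : |g x i - g z i| ≤ Lf * D := by
    have h1 := coord_le (g x - g z) i
    have h2 := hLf x z
    simp only [PiLp.sub_apply] at h1
    linarith
  have hdiff : |vx - vz| ≤ (1 + Lf / M i) * D := by
    have : vx - vz = (x i - z i) - (g x i - g z i) / M i := by
      rw [hvx, hvz]; ring
    rw [this]
    calc |(x i - z i) - (g x i - g z i) / M i|
        ≤ |x i - z i| + |(g x i - g z i) / M i| := abs_sub _ _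
      _ ≤ D + (Lf * D) / M i := by
          gcongr
          rw [abs_div, abs_of_pos hMpos]
          exact div_le_div_of_nonneg_right hg hMpos.le |>.trans_eq rfl
      _ = (1 + Lf / M i) * D := by field_simp
  -- main computation
  have hΔeq : Δ i x - Δ i z = M i / 2 * ((vx - vz) * (vx + vz)) := by
    rw [hΔ i x, hΔ i z, ← hvx, ← hvz]; ring
  rw [hΔeq, abs_mul, abs_mul, abs_of_pos (by positivity : (0:ℝ) < M i / 2)]
  have hsum : |vx + vz| ≤ |vx - vz| + 2 * |vz| := by
    have : vx + vz = (vx - vz) + 2 * vz := by ring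
    rw [this]
    calc |(vx - vz) + 2 * vz| ≤ |vx - vz| + |2 * vz| := abs_add_le _ _
      _ = |vx - vz| + 2 * |vz| := by rw [abs_mul]; norm_num
  have habs0 : 0 ≤ |vx - vz| := abs_nonneg _
  have hvz0 : 0 ≤ |vz| := abs_nonneg _
  have hA0 : 0 ≤ (1 + Lf / M i) * D := le_trans habs0 hdiff
  set A := (1 + Lf / M i) * D with hA
  have h1 : |vx - vz| * |vx + vz| ≤ A * (|vx - vz| + 2 * |vz|) :=
    mul_le_mul hdiff hsum (abs_nonneg _) hA0
  have h2 : A * (|vx - vz| + 2 * |vz|) ≤ A * (A + 2 * vmax i) :=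
    mul_le_mul_of_nonneg_left (by linarith) hA0
  calc M i / 2 * (|vx - vz| * |vx + vz|)
      ≤ M i / 2 * (A * (A + 2 * vmax i)) := by
        apply mul_le_mul_of_nonneg_left (h1.trans h2) (by positivity)
    _ = M i * vmax i * (1 + Lf / M i) * D + M i / 2 * (1 + Lf / M i) ^ 2 * D ^ 2 := by
        rw [hA]; ring
end

section
/- Consider the scalar case (n_i = 1 for all blocks, N = n), let f be convex with Lipschitz continuous gradient (global constant L_f), assume the set of basic local minimizers 𝒯_f is finite, and fix β_i > 0. For the exact approximation u_i(y_i;x) = f(x + U_i(y_i − x_i)) + (β_i/2)|y_i − x_i|², define h_i(x) = argmin_{y_i ∈ ℝ} u_i(y_i;x), v^i(x) = x + U_i(h_i(x) − x_i), and Δ^i(x) = f(x − U_i x_i) + (β_i/2)|x_i|² − f(v^i(x)) − (β_i/2)|(v^i(x))_i − x_i|². Then for all x ∈ ℝⁿ and all z ∈ 𝒯_f: |Δ^i(x) − Δ^i(z)| ≤ γ^i ‖x − z‖ + ((L_f + β_i)/2)‖x − z‖², where γ^i = max{ ‖∇f(y − U_i y_i)‖ + ‖∇f(v^i(y))‖ +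 β_i|y_i| : y ∈ 𝒯_f }. -/
/-!
Put `ψ(x) = uᵢ(0; x) = f(x - Uᵢxᵢ) + (βᵢ/2)xᵢ²` and `φ(x) = min_s uᵢ(s; x)`, so that `Δⁱ = ψ - φ`.
Both functions lie between their linearization at `z` and that linearization plus a quadratic.
For `ψ` this is convexity and the descent lemma for `f` at `z - Uᵢzᵢ`. For `φ` the slope is
`∇f(vⁱ(z))`: the lower bound is convexity of `f` combined with the first-order condition
`∇ᵢf(vⁱ(z)) = -βᵢ(hᵢ(z) - zᵢ)`, the upper bound tests `uᵢ(·; x)` at the step `hᵢ(z) - zᵢ` and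
applies the descent lemma. Cauchy–Schwarz bounds the linear terms by a constant depending on `z`,
which is at most `γⁱ` since `𝒯_f` is finite.
-/

open Finset

open AffineMap
open scoped RealInnerProductSpace

section FirstOrder

variable {E : Type*} [NormedAddCommGroup E] [InnerProductSpace ℝ E] [CompleteSpace E]
  {f : E → ℝ} {g : E → E}

theorem HasGradientAt.comp_hasDerivAt {f' : E} {γ : ℝ → E} {γ' : E} {t : ℝ}
    (hf : HasGradientAt f f' (γ t)) (hγ : HasDerivAt γ γ' t) :
    HasDerivAt (fun s => f (γ s)) ⟪f', γ'⟫ t := by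
  have h := (hasGradientAt_iff_hasFDerivAt.1 hf).comp_hasDerivAt t hγ
  simp only [InnerProductSpace.toDual_apply_apply] at h
  exact h

theorem ConvexOn.add_inner_gradient_le_s14 (hconv : ConvexOn ℝ Set.univ f)
    (hgrad : ∀ x, HasGradientAt f (g x) x) (a b : E) :
    f a + ⟪g a, b - a⟫ ≤ f b := by
  have hderiv : HasDerivAt (fun s : ℝ => f (lineMap a b s)) ⟪g a, b - a⟫ 0 := by
    simpa using (hgrad (lineMap a b (0 : ℝ))).comp_hasDerivAt hasDerivAt_lineMap
  have := (hconv.comp_affineMap (lineMap a b)).le_slope_of_hasDerivAt (Set.mem_univ 0)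
    (Set.mem_univ 1) zero_lt_one hderiv
  simp only [slope_def_field, Function.comp_def, lineMap_apply_zero, lineMap_apply_one] at this
  linarith

theorem le_add_inner_gradient_add_sq (hgrad : ∀ x, HasGradientAt f (g x) x) {Lf : ℝ}
    (hLf : ∀ x y, ‖g x - g y‖ ≤ Lf * ‖x - y‖) (a b : E) :
    f b ≤ f a + ⟪g a, b - a⟫ + Lf / 2 * ‖b - a‖ ^ 2 := by
  have hderiv (t : ℝ) : HasDerivAt (fun s : ℝ => f (lineMap a b s)) ⟪g (lineMap a b t), b - a⟫ t :=
    (hgrad _).comp_hasDerivAt hasDerivAt_lineMap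
  have hB (t : ℝ) : HasDerivAt (fun s => f a + s * ⟪g a, b - a⟫ + Lf / 2 * s ^ 2 * ‖b - a‖ ^ 2)
      (⟪g a, b - a⟫ + Lf * t * ‖b - a‖ ^ 2) t := by
    have h := (((hasDerivAt_id' t).mul_const ⟪g a, b - a⟫).const_add (f a)).add
      (((hasDerivAt_pow 2 t).const_mul (Lf / 2)).mul_const (‖b - a‖ ^ 2))
    exact h.congr_deriv (by push_cast; ring)
  have hslope (t : ℝ) (ht : 0 ≤ t) :
      ⟪g (lineMap a b t), b - a⟫ ≤ ⟪g a, b - a⟫ + Lf * t * ‖b - a‖ ^ 2 := by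
    have hdist : ‖lineMap a b t - a‖ = t * ‖b - a‖ := by
      rw [← dist_eq_norm, dist_lineMap_left, Real.norm_of_nonneg ht, dist_eq_norm']
    calc ⟪g (lineMap a b t), b - a⟫
        = ⟪g a, b - a⟫ + ⟪g (lineMap a b t) - g a, b - a⟫ := by rw [inner_sub_left]; ring
      _ ≤ ⟪g a, b - a⟫ + ‖g (lineMap a b t) - g a‖ * ‖b - a‖ := by
          gcongr; exact real_inner_le_norm _ _
      _ ≤ ⟪g a, b - a⟫ + Lf * (t * ‖b - a‖) * ‖b - a‖ := by
          gcongr; rw [← hdist]; exact hLf _ _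
      _ = ⟪g a, b - a⟫ + Lf * t * ‖b - a‖ ^ 2 := by ring
  have := image_le_of_deriv_right_le_deriv_boundary
    (fun t _ => (hderiv t).continuousAt.continuousWithinAt) (fun t _ => (hderiv t).hasDerivWithinAt)
    (by simp) (fun t _ => (hB t).continuousAt.continuousWithinAt)
    (fun t _ => (hB t).hasDerivWithinAt) (fun t ht => hslope t ht.1)
    (Set.right_mem_Icc.2 zero_le_one)
  simpa using this

noncomputable section CoordinateModel

variable {E : Type*} [NormedAddCommGroup E] [InnerProductSpace ℝ E]

def coordUpdate (e x : E) (s : ℝ) : E := x + (s - ⟪e, x⟫) • e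

/-- `coordModel f β e x s` is the paper's `uᵢ(s; x)` for the direction `e = Uᵢ`, and
`coordGap f β e x (hᵢ x) = uᵢ(0; x) - uᵢ(hᵢ x; x)` is `Δⁱ(x)`. -/
def coordModel (f : E → ℝ) (β : ℝ) (e x : E) (s : ℝ) : ℝ :=
  f (coordUpdate e x s) + β / 2 * (s - ⟪e, x⟫) ^ 2

def coordGap (f : E → ℝ) (β : ℝ) (e x : E) (t : ℝ) : ℝ :=
  coordModel f β e x 0 - coordModel f β e x t

variable {e : E}

theorem hasDerivAt_coordUpdate (e x : E) (s : ℝ) : HasDerivAt (coordUpdate e x) e s := by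
  have h := (((hasDerivAt_id' s).sub_const ⟪e, x⟫).smul_const e).const_add x
  rw [one_smul] at h
  exact h

theorem inner_coordUpdate (he : ‖e‖ = 1) (x : E) (s : ℝ) : ⟪e, coordUpdate e x s⟫ = s := by
  simp [coordUpdate, inner_add_right, real_inner_smul_right, he]

theorem coordUpdate_zero_sub (x z : E) :
    coordUpdate e x 0 - coordUpdate e z 0 = coordUpdate e (x - z) 0 := by
  simp only [coordUpdate, inner_sub_right, zero_sub, neg_smul, sub_smul]
  abel

theorem norm_sq_eq_norm_coordUpdate_zero_sq_add (he : ‖e‖ = 1) (y : E) :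
    ‖y‖ ^ 2 = ‖coordUpdate e y 0‖ ^ 2 + ⟪e, y⟫ ^ 2 := by
  rw [coordUpdate, zero_sub, neg_smul, ← sub_eq_add_neg, norm_sub_sq_real, real_inner_smul_right,
    norm_smul, he, real_inner_comm]
  simp only [Real.norm_eq_abs, mul_one, sq_abs]
  ring

theorem norm_coordUpdate_zero_le (he : ‖e‖ = 1) (y : E) : ‖coordUpdate e y 0‖ ≤ ‖y‖ := by
  have := norm_sq_eq_norm_coordUpdate_zero_sq_add he y
  exact (sq_le_sq₀ (norm_nonneg _) (norm_nonneg _)).1 (by nlinarith [sq_nonneg ⟪e, y⟫])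

theorem abs_inner_le_norm_of_norm_eq_one (he : ‖e‖ = 1) (y : E) : |⟪e, y⟫| ≤ ‖y‖ := by
  simpa [he] using abs_real_inner_le_norm e y

variable [CompleteSpace E] {f : E → ℝ} {g : E → E} {β : ℝ}

theorem inner_gradient_coordUpdate_of_isMinOn (hgrad : ∀ x, HasGradientAt f (g x) x) {z : E}
    {t : ℝ} (hmin : IsMinOn (coordModel f β e z) Set.univ t) :
    ⟪g (coordUpdate e z t), e⟫ = -(β * (t - ⟪e, z⟫)) := by
  have hquad : HasDerivAt (fun s : ℝ => β / 2 * (s - ⟪e, z⟫) ^ 2) (β * (t - ⟪e, z⟫)) t := by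
    have h := (((hasDerivAt_id' t).sub_const ⟪e, z⟫).pow 2).const_mul (β / 2)
    exact h.congr_deriv (by push_cast; ring)
  have hderiv := ((hgrad _).comp_hasDerivAt (hasDerivAt_coordUpdate e z t)).add hquad
  have := (hmin.isLocalMin Filter.univ_mem).hasDerivAt_eq_zero hderiv
  linarith

theorem coordModel_add_inner_le (hconv : ConvexOn ℝ Set.univ f)
    (hgrad : ∀ x, HasGradientAt f (g x) x) (hβ : 0 ≤ β) {z : E} {tz : ℝ}
    (hz : IsMinOn (coordModel f β e z) Set.univ tz) (x : E) (tx : ℝ) :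
    coordModel f β e z tz + ⟪g (coordUpdate e z tz), x - z⟫ ≤ coordModel f β e x tx := by
  have hsub : coordUpdate e x tx - coordUpdate e z tz
      = (x - z) + ((tx - ⟪e, x⟫) - (tz - ⟪e, z⟫)) • e := by
    simp only [coordUpdate, sub_smul]; abel
  have hsupport := hconv.add_inner_gradient_le_s14 hgrad (coordUpdate e z tz) (coordUpdate e x tx)
  rw [hsub, inner_add_right, real_inner_smul_right,
    inner_gradient_coordUpdate_of_isMinOn hgrad hz] at hsupport
  unfold coordModel
  nlinarith [mul_nonneg hβ (sq_nonneg ((tx - ⟪e, x⟫) - (tz - ⟪e, z⟫)))]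

theorem coordModel_le_add_inner_add_sq (hgrad : ∀ x, HasGradientAt f (g x) x) {Lf : ℝ}
    (hLf : ∀ x y, ‖g x - g y‖ ≤ Lf * ‖x - y‖) {x : E} {tx : ℝ}
    (hx : IsMinOn (coordModel f β e x) Set.univ tx) (z : E) (tz : ℝ) :
    coordModel f β e x tx
      ≤ coordModel f β e z tz + ⟪g (coordUpdate e z tz), x - z⟫ + Lf / 2 * ‖x - z‖ ^ 2 := by
  have hupd : coordUpdate e x (tz - ⟪e, z⟫ + ⟪e, x⟫) = coordUpdate e z tz + (x - z) := by
    simp only [coordUpdate, add_sub_cancel_right]; abel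
  have hcand := isMinOn_univ_iff.1 hx (tz - ⟪e, z⟫ + ⟪e, x⟫)
  have hdesc := le_add_inner_gradient_add_sq hgrad hLf (coordUpdate e z tz)
    (coordUpdate e z tz + (x - z))
  simp only [add_sub_cancel_left] at hdesc
  simp only [coordModel, hupd, add_sub_cancel_right] at hcand ⊢
  linarith

theorem coordModel_zero_add_inner_le (hconv : ConvexOn ℝ Set.univ f)
    (hgrad : ∀ x, HasGradientAt f (g x) x) (hβ : 0 ≤ β) (x z : E) :
    coordModel f β e z 0 + ⟪g (coordUpdate e z 0), coordUpdate e (x - z) 0⟫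
      + β * ⟪e, z⟫ * ⟪e, x - z⟫ ≤ coordModel f β e x 0 := by
  have hsupport := hconv.add_inner_gradient_le_s14 hgrad (coordUpdate e z 0) (coordUpdate e x 0)
  rw [coordUpdate_zero_sub] at hsupport
  simp only [coordModel, inner_sub_right] at hsupport ⊢
  nlinarith [mul_nonneg hβ (sq_nonneg (⟪e, x⟫ - ⟪e, z⟫))]

theorem coordModel_zero_le (hgrad : ∀ x, HasGradientAt f (g x) x) {Lf : ℝ}
    (hLf : ∀ x y, ‖g x - g y‖ ≤ Lf * ‖x - y‖) (x z : E) :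
    coordModel f β e x 0 ≤ coordModel f β e z 0 + ⟪g (coordUpdate e z 0), coordUpdate e (x - z) 0⟫
      + β * ⟪e, z⟫ * ⟪e, x - z⟫ + Lf / 2 * ‖coordUpdate e (x - z) 0‖ ^ 2
      + β / 2 * ⟪e, x - z⟫ ^ 2 := by
  have hdesc := le_add_inner_gradient_add_sq hgrad hLf (coordUpdate e z 0) (coordUpdate e x 0)
  rw [coordUpdate_zero_sub] at hdesc
  simp only [coordModel, inner_sub_right] at hdesc ⊢
  linarith

theorem abs_coordGap_sub_le (hconv : ConvexOn ℝ Set.univ f) (hgrad : ∀ x, HasGradientAt f (g x) x)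
    {Lf : ℝ} (hLf : ∀ x y, ‖g x - g y‖ ≤ Lf * ‖x - y‖) (he : ‖e‖ = 1) (hβ : 0 ≤ β)
    {x z : E} {tx tz : ℝ} (hx : IsMinOn (coordModel f β e x) Set.univ tx)
    (hz : IsMinOn (coordModel f β e z) Set.univ tz) :
    |coordGap f β e x tx - coordGap f β e z tz|
      ≤ (‖g (coordUpdate e z 0)‖ + ‖g (coordUpdate e z tz)‖ + β * |⟪e, z⟫|) * ‖x - z‖
        + (Lf + β) / 2 * ‖x - z‖ ^ 2 := by
  have hL : 0 ≤ Lf := by simpa [he] using (norm_nonneg _).trans (hLf e 0)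
  have hproj := norm_coordUpdate_zero_le he (x - z)
  have hcoord := abs_inner_le_norm_of_norm_eq_one he (x - z)
  have hlin₁ : |⟪g (coordUpdate e z 0), coordUpdate e (x - z) 0⟫|
      ≤ ‖g (coordUpdate e z 0)‖ * ‖x - z‖ :=
    (abs_real_inner_le_norm _ _).trans (by gcongr)
  have hlin₂ : |⟪g (coordUpdate e z tz), x - z⟫| ≤ ‖g (coordUpdate e z tz)‖ * ‖x - z‖ :=
    abs_real_inner_le_norm _ _
  have hlin₃ : |β * ⟪e, z⟫ * ⟪e, x - z⟫| ≤ β * |⟪e, z⟫| * ‖x - z‖ := by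
    rw [abs_mul, abs_mul, abs_of_nonneg hβ]; gcongr
  have hquad : Lf / 2 * ‖coordUpdate e (x - z) 0‖ ^ 2 + β / 2 * ⟪e, x - z⟫ ^ 2
      ≤ (Lf + β) / 2 * ‖x - z‖ ^ 2 := by
    rw [norm_sq_eq_norm_coordUpdate_zero_sq_add he (x - z)]
    nlinarith [sq_nonneg ‖coordUpdate e (x - z) 0‖, sq_nonneg ⟪e, x - z⟫]
  have hup₀ := coordModel_zero_le (e := e) (β := β) hgrad hLf x z
  have hlow₀ := coordModel_zero_add_inner_le (e := e) hconv hgrad hβ x z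
  have hup := coordModel_le_add_inner_add_sq hgrad hLf hx z tz
  have hlow := coordModel_add_inner_le hconv hgrad hβ hz x tx
  unfold coordGap
  rw [abs_sub_le_iff]
  constructor
  · linarith [(abs_le.1 hlin₁).2, (abs_le.1 hlin₂).1, (abs_le.1 hlin₃).2]
  · nlinarith [(abs_le.1 hlin₁).1, (abs_le.1 hlin₂).2, (abs_le.1 hlin₃).1,
      mul_nonneg hβ (sq_nonneg ‖x - z‖)]

end CoordinateModel

theorem EuclideanSpace.inner_single_one_left {ι : Type*} [Fintype ι] [DecidableEq ι] (i : ι)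
    (y : EuclideanSpace ℝ ι) : ⟪EuclideanSpace.single i (1 : ℝ), y⟫ = y i := by
  simp [EuclideanSpace.inner_single_left]

theorem EuclideanSpace.add_single_sub_eq_coordUpdate {ι : Type*} [Fintype ι] [DecidableEq ι]
    (i : ι) (y : EuclideanSpace ℝ ι) (s : ℝ) :
    y + EuclideanSpace.single i (s - y i) = coordUpdate (EuclideanSpace.single i 1) y s := by
  ext j
  by_cases hj : j = i <;> simp [coordUpdate, EuclideanSpace.inner_single_one_left, hj]

theorem EuclideanSpace.sub_single_eq_coordUpdate_zero {ι : Type*} [Fintype ι] [DecidableEq ι]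
    (i : ι) (y : EuclideanSpace ℝ ι) :
    y - EuclideanSpace.single i (y i) = coordUpdate (EuclideanSpace.single i 1) y 0 := by
  rw [← EuclideanSpace.add_single_sub_eq_coordUpdate, zero_sub, sub_eq_add_neg]
  exact congrArg (y + ·) (PiLp.single_neg 2 i).symm

theorem le_csSup_of_finite {α : Type*} {s : Set α} (hs : s.Finite) (F : α → ℝ) {a : α}
    (ha : a ∈ s) : F a ≤ sSup {t | ∃ y ∈ s, t = F y} := by
  refine le_csSup ((hs.image F).bddAbove.mono ?_) ⟨a, ha, rfl⟩
  rintro t ⟨y, hy, rfl⟩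
  exact ⟨y, hy, rfl⟩

theorem statement14_general {n : ℕ} (lam : Fin n → ℝ)
    (f : EuclideanSpace ℝ (Fin n) → ℝ)
    (g : EuclideanSpace ℝ (Fin n) → EuclideanSpace ℝ (Fin n))
    (hconv : ConvexOn ℝ Set.univ f)
    (hgrad : ∀ x, HasGradientAt f (g x) x)
    (Lf : ℝ) (hLf : ∀ x y, ‖g x - g y‖ ≤ Lf * ‖x - y‖)
    (hTf : (basicLocalMin lam g).Finite)
    (β : Fin n → ℝ) (hβ : ∀ i, 0 < β i)
    -- the exact coordinate minimizer `hᵢ(x)`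
    (hmin : Fin n → EuclideanSpace ℝ (Fin n) → ℝ)
    (hhmin : ∀ (i : Fin n) (x : EuclideanSpace ℝ (Fin n)) (y : ℝ),
      f (x + EuclideanSpace.single i (hmin i x - x i)) + β i / 2 * (hmin i x - x i) ^ 2
        ≤ f (x + EuclideanSpace.single i (y - x i)) + β i / 2 * (y - x i) ^ 2)
    (v : Fin n → EuclideanSpace ℝ (Fin n) → EuclideanSpace ℝ (Fin n))
    (hv : ∀ i x, v i x = x + EuclideanSpace.single i (hmin i x - x i))
    (Δ : Fin n → EuclideanSpace ℝ (Fin n) → ℝ)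
    (hΔ : ∀ i x, Δ i x = f (x - EuclideanSpace.single i (x i)) + β i / 2 * (x i) ^ 2
      - f (v i x) - β i / 2 * ((v i x) i - x i) ^ 2)
    (γ : Fin n → ℝ)
    (hγ : ∀ i, γ i = sSup {t : ℝ | ∃ y ∈ basicLocalMin lam g,
      t = ‖g (y - EuclideanSpace.single i (y i))‖ + ‖g (v i y)‖ + β i * |y i|}) :
    ∀ (i : Fin n) (x : EuclideanSpace ℝ (Fin n)),
      ∀ z ∈ basicLocalMin lam g,
        |Δ i x - Δ i z| ≤ γ i * ‖x - z‖ + (Lf + β i) / 2 * ‖x - z‖ ^ 2 := by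
  intro i x z hz
  set e : EuclideanSpace ℝ (Fin n) := EuclideanSpace.single i 1
  have he : ‖e‖ = 1 := by simp [e]
  have hcoord (y : EuclideanSpace ℝ (Fin n)) : y i = ⟪e, y⟫ :=
    (EuclideanSpace.inner_single_one_left i y).symm
  have hupd := EuclideanSpace.add_single_sub_eq_coordUpdate i
  have hv' (y) : v i y = coordUpdate e y (hmin i y) := (hv i y).trans (hupd y _)
  have hdrop := EuclideanSpace.sub_single_eq_coordUpdate_zero i
  have hgap (y) : Δ i y = coordGap f (β i) e y (hmin i y) := by
    rw [hΔ, hdrop, hv', hcoord, hcoord (coordUpdate _ _ _), inner_coordUpdate he]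
    simp only [coordGap, coordModel]
    ring
  have hminOn (y) : IsMinOn (coordModel f (β i) e y) Set.univ (hmin i y) :=
    isMinOn_univ_iff.2 fun s => by
      have h := hhmin i y s
      rw [hupd, hupd, hcoord] at h
      exact h
  have hγz :
      ‖g (coordUpdate e z 0)‖ + ‖g (coordUpdate e z (hmin i z))‖ + β i * |⟪e, z⟫| ≤ γ i := by
    rw [hγ, ← hdrop, ← hv', ← hcoord]
    exact le_csSup_of_finite hTf
      (fun y => ‖g (y - EuclideanSpace.single i (y i))‖ + ‖g (v i y)‖ + β i * |y i|) hz
  rw [hgap, hgap]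
  refine (abs_coordGap_sub_le hconv hgrad hLf he (hβ i).le (hminOn x) (hminOn z)).trans ?_
  gcongr

/-- In the scalar case, for the exact approximation
`uᵢ(yᵢ;x) = f(x + Uᵢ(yᵢ - xᵢ)) + (βᵢ/2)|yᵢ - xᵢ|²` with associated exact coordinate
minimizer `hᵢ(x)`, `vⁱ(x) = x + Uᵢ(hᵢ(x) - xᵢ)` and
`Δⁱ(x) = f(x - Uᵢxᵢ) + (βᵢ/2)|xᵢ|² - f(vⁱ(x)) - (βᵢ/2)|(vⁱ(x))ᵢ - xᵢ|²`, one has for all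
`x` and all `z ∈ 𝒯_f`: `|Δⁱ(x) - Δⁱ(z)| ≤ γⁱ‖x-z‖ + ((L_f+βᵢ)/2)‖x-z‖²`. -/
theorem statement14 {n : ℕ} (lam : Fin n → ℝ) (hlam : ∀ i, 0 ≤ lam i)
    (f : EuclideanSpace ℝ (Fin n) → ℝ)
    (g : EuclideanSpace ℝ (Fin n) → EuclideanSpace ℝ (Fin n))
    (hconv : ConvexOn ℝ Set.univ f)
    (hgrad : ∀ x, HasGradientAt f (g x) x)
    (Lf : ℝ) (hLf : ∀ x y, ‖g x - g y‖ ≤ Lf * ‖x - y‖)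
    (hTf : (basicLocalMin lam g).Finite)
    (β : Fin n → ℝ) (hβ : ∀ i, 0 < β i)
    -- the exact coordinate minimizer `hᵢ(x)`
    (hmin : Fin n → EuclideanSpace ℝ (Fin n) → ℝ)
    (hhmin : ∀ (i : Fin n) (x : EuclideanSpace ℝ (Fin n)) (y : ℝ),
      f (x + EuclideanSpace.single i (hmin i x - x i)) + β i / 2 * (hmin i x - x i) ^ 2
        ≤ f (x + EuclideanSpace.single i (y - x i)) + β i / 2 * (y - x i) ^ 2)
    (v : Fin n → EuclideanSpace ℝ (Fin n) → EuclideanSpace ℝ (Fin n))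
    (hv : ∀ i x, v i x = x + EuclideanSpace.single i (hmin i x - x i))
    (Δ : Fin n → EuclideanSpace ℝ (Fin n) → ℝ)
    (hΔ : ∀ i x, Δ i x = f (x - EuclideanSpace.single i (x i)) + β i / 2 * (x i) ^ 2
      - f (v i x) - β i / 2 * ((v i x) i - x i) ^ 2)
    (γ : Fin n → ℝ)
    (hγ : ∀ i, γ i = sSup {t : ℝ | ∃ y ∈ basicLocalMin lam g,
      t = ‖g (y - EuclideanSpace.single i (y i))‖ + ‖g (v i y)‖ + β i * |y i|}) :
    ∀ (i : Fin n) (x : EuclideanSpace ℝ (Fin n)),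
      ∀ z ∈ basicLocalMin lam g,
        |Δ i x - Δ i z| ≤ γ i * ‖x - z‖ + (Lf + β i) / 2 * ‖x - z‖ ^ 2 :=
  statement14_general lam f g hconv hgrad Lf hLf hTf β hβ hmin hhmin v hv Δ hΔ γ hγ
end FirstOrder
end
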